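/- arXiv:2410.17095 — 7 statements merged into one kernel-verified Lean document; each statement's English description precedes it below -/
import Mathlib

section
/- For every prior P(S,Y) and every ε≥0, any ε-IP Blackwell optimal information structure P(S,Y,T) satisfies P(Y=1|S=s,T=t) ∈ {0,1} for every s∈𝒮 and t∈𝒯 with P(S=s,T=t)>0. -/
open Real
open scoped Classical

noncomputable section

namespace IPPaper

variable {S T : Type} [Fintype S] [Fintype T]

/-- Marginal probability of the secret `S`. -/
def pS (P : S → Bool → T → ℝ) (s : S) : ℝ := ∑ y, ∑ t, P s y t

/-- Marginal probability of the signal `T`. -/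
def pT (P : S → Bool → T → ℝ) (t : T) : ℝ := ∑ s, ∑ y, P s y t

/-- Joint marginal on `(S,T)`. -/
def pST (P : S → Bool → T → ℝ) (s : S) (t : T) : ℝ := ∑ y, P s y t

/-- Joint marginal on `(Y,T)`. -/
def pYT (P : S → Bool → T → ℝ) (y : Bool) (t : T) : ℝ := ∑ s, P s y t

/-- Joint marginal on `(S,Y)`. -/
def pSY (P : S → Bool → T → ℝ) (s : S) (y : Bool) : ℝ := ∑ t, P s y t

/-- An information structure: nonnegative, sums to one, every secret has positive
probability. -/
def InfoStructure (P : S → Bool → T → ℝ) : Prop :=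
  (∀ s y t, 0 ≤ P s y t) ∧ (∑ s, ∑ y, ∑ t, P s y t) = 1 ∧ ∀ s, 0 < pS P s

/-- Conditional probability `P(T = t | S = s)`. -/
def condTS (P : S → Bool → T → ℝ) (t : T) (s : S) : ℝ := pST P s t / pS P s

/-- Conditional probability `P(S = s | T = t)`. -/
def condST (P : S → Bool → T → ℝ) (s : S) (t : T) : ℝ := pST P s t / pT P t

/-- Posterior `P(Y = 1 | T = t)`. -/
def postYT (P : S → Bool → T → ℝ) (t : T) : ℝ := pYT P true t / pT P t

/-- Posterior `P(Y = 1 | S = s, T = t)`. -/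
def postYST (P : S → Bool → T → ℝ) (s : S) (t : T) : ℝ := P s true t / pST P s t

/-- Prior conditional `P(Y = 1 | S = s)`. -/
def qS (P : S → Bool → T → ℝ) (s : S) : ℝ := pSY P s true / pS P s

/-- `ε`-inferential privacy. -/
def IsIP (ε : ℝ) (P : S → Bool → T → ℝ) : Prop :=
  ∀ s₁ s₂ t, condTS P t s₁ ≤ Real.exp ε * condTS P t s₂

/-- Blackwell dominance via a row-stochastic garbling kernel. -/
def BlackwellDom {T₁ T₂ : Type} [Fintype T₁] [Fintype T₂]
    (Q₁ : Bool → T₁ → ℝ) (Q₂ : Bool → T₂ → ℝ) : Prop :=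
  ∃ G : T₁ → T₂ → ℝ, (∀ a b, 0 ≤ G a b) ∧ (∀ a, ∑ b, G a b = 1) ∧
    ∀ y b, Q₂ y b = ∑ a, Q₁ y a * G a b

/-- `ε`-IP Blackwell optimality: no ε-IP information structure with the same
marginal on `(S,Y)` (over any finite signal set) strictly Blackwell dominates it. -/
def BlackwellOptimal (ε : ℝ) (P : S → Bool → T → ℝ) : Prop :=
  InfoStructure P ∧ IsIP ε P ∧
  ¬ ∃ (n : ℕ) (P' : S → Bool → Fin n → ℝ),
      InfoStructure P' ∧ IsIP ε P' ∧ (∀ s y, pSY P' s y = pSY P s y) ∧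
      BlackwellDom (pYT P') (pYT P) ∧ ¬ BlackwellDom (pYT P) (pYT P')

/-- Membership in `T̃`: signals with positive probability and nondegenerate posterior. -/
def inTildeT (P : S → Bool → T → ℝ) (t : T) : Prop :=
  0 < pT P t ∧ postYT P t ≠ 0 ∧ postYT P t ≠ 1

/-- `L_t = min_s P(T=t|S=s)`. -/
def Lval [Nonempty S] (P : S → Bool → T → ℝ) (t : T) : ℝ :=
  Finset.univ.inf' Finset.univ_nonempty (fun s => condTS P t s)

/-- `H_t = max_s P(T=t|S=s)`. -/
def Hval [Nonempty S] (P : S → Bool → T → ℝ) (t : T) : ℝ :=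
  Finset.univ.sup' Finset.univ_nonempty (fun s => condTS P t s)

/-- Expected utility `Σ_{t : P(T=t)>0} P(T=t)·u(P(Y=1|T=t))`. -/
def EU (P : S → Bool → T → ℝ) (u : ℝ → ℝ) : ℝ :=
  ∑ t ∈ Finset.univ.filter (fun t => 0 < pT P t), pT P t * u (postYT P t)

end IPPaper

namespace IPPaper

section Aux
set_option linter.unusedSectionVars false
set_option linter.unusedVariables false

variable {S T : Type} [Fintype S] [Fintype T]

-- ===== auxiliary development =====

/-- Value of information functional. -/
def Vfun {T : Type} [Fintype T] (l : ℝ) (Q : Bool → T → ℝ) : ℝ :=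
  ∑ t, max (l * Q true t) (Q false t)

lemma V_mono {T₁ T₂ : Type} [Fintype T₁] [Fintype T₂] {l : ℝ}
    {Q₁ : Bool → T₁ → ℝ} {Q₂ : Bool → T₂ → ℝ}
    (h : BlackwellDom Q₁ Q₂) : Vfun l Q₂ ≤ Vfun l Q₁ := by
  obtain ⟨G, hG0, hG1, hGQ⟩ := h
  calc Vfun l Q₂ = ∑ b, max (l * ∑ a, Q₁ true a * G a b) (∑ a, Q₁ false a * G a b) := by
        simp [Vfun, hGQ]
    _ ≤ ∑ b, ∑ a, max (l * Q₁ true a) (Q₁ false a) * G a b := by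
        refine Finset.sum_le_sum fun b _ => max_le ?_ ?_
        · rw [Finset.mul_sum]
          refine Finset.sum_le_sum fun a _ => ?_
          rw [← mul_assoc]
          exact mul_le_mul_of_nonneg_right (le_max_left _ _) (hG0 a b)
        · exact Finset.sum_le_sum fun a _ =>
            mul_le_mul_of_nonneg_right (le_max_right _ _) (hG0 a b)
    _ = ∑ a, max (l * Q₁ true a) (Q₁ false a) * ∑ b, G a b := by
        rw [Finset.sum_comm]; simp [Finset.mul_sum]
    _ = Vfun l Q₁ := by simp [hG1, Vfun]

/-- Embedding of old signals into the enlarged signal space. -/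
def iota (T : Type) [Fintype T] (t : T) : Fin (Fintype.card T + 1) :=
  (Fintype.equivFin T t).castSucc

lemma iota_ne_last (t : T) : iota T t ≠ Fin.last _ :=
  Fin.ne_last_of_lt (Fin.castSucc_lt_last _)

lemma iota_inj : Function.Injective (iota T) := fun a b h => by
  have := Fin.castSucc_injective _ h
  exact (Fintype.equivFin T).injective this

lemma sum_fin_succ_card (f : Fin (Fintype.card T + 1) → ℝ) :
    ∑ j, f j = (∑ t, f (iota T t)) + f (Fin.last _) := by
  rw [Fin.sum_univ_castSucc, ← Equiv.sum_comp (Fintype.equivFin T) (fun i => f i.castSucc)]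
  rfl

lemma fin_cases' (j : Fin (Fintype.card T + 1)) : j = Fin.last _ ∨ ∃ t, j = iota T t := by
  by_cases h : j = Fin.last _
  · exact Or.inl h
  · refine Or.inr ⟨(Fintype.equivFin T).symm (j.castPred h), ?_⟩
    simp [iota, Fin.castSucc_castPred]

/-- Mass moved to the new signal. -/
def Amass (P : S → Bool → T → ℝ) (t₀ : T) (β : ℝ) (s : S) (y : Bool) : ℝ :=
  if 0 < P s true t₀ then (if y then β * pST P s t₀ else 0)
  else (if y then 0 else β * pST P s t₀)

def Bmass (P : S → Bool → T → ℝ) (t₀ : T) (β : ℝ) (s : S) (y : Bool) (t : T) : ℝ :=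
  if t = t₀ then P s y t - Amass P t₀ β s y else P s y t

/-- The split structure. -/
def splitP (P : S → Bool → T → ℝ) (t₀ : T) (β : ℝ) :
    S → Bool → Fin (Fintype.card T + 1) → ℝ :=
  fun s y j =>
    (if j = Fin.last _ then Amass P t₀ β s y else 0) +
    ∑ t, if j = iota T t then Bmass P t₀ β s y t else 0

lemma splitP_last (P : S → Bool → T → ℝ) (t₀ : T) (β : ℝ) (s : S) (y : Bool) :
    splitP P t₀ β s y (Fin.last _) = Amass P t₀ β s y := by
  have : ∀ t : T, (if (Fin.last (Fintype.card T)) = iota T t then Bmass P t₀ β s y t else 0) = 0 :=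
    fun t => if_neg (fun h => iota_ne_last t h.symm)
  simp [splitP, Finset.sum_congr rfl (fun t _ => this t)]

lemma splitP_iota (P : S → Bool → T → ℝ) (t₀ : T) (β : ℝ) (s : S) (y : Bool) (t : T) :
    splitP P t₀ β s y (iota T t) = Bmass P t₀ β s y t := by
  rw [splitP, if_neg (iota_ne_last t)]
  rw [show (∑ t' : T, if iota T t = iota T t' then Bmass P t₀ β s y t' else 0)
      = ∑ t' : T, if t = t' then Bmass P t₀ β s y t' else 0 from
    Finset.sum_congr rfl (fun t' _ => by
      congr 1
      simp only [eq_iff_iff]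
      exact ⟨fun h => iota_inj h, fun h => by rw [h]⟩)]
  simp

lemma Amass_sum (P : S → Bool → T → ℝ) (t₀ : T) (β : ℝ) (s : S) :
    Amass P t₀ β s true + Amass P t₀ β s false = β * pST P s t₀ := by
  unfold Amass; split <;> simp

lemma Bmass_sum (P : S → Bool → T → ℝ) (t₀ : T) (β : ℝ) (s : S) (y : Bool) :
    ∑ t, Bmass P t₀ β s y t = pSY P s y - Amass P t₀ β s y := by
  have h : ∀ t, Bmass P t₀ β s y t = P s y t - (if t = t₀ then Amass P t₀ β s y else 0) := by
    intro t; unfold Bmass; split <;> simp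
  rw [Finset.sum_congr rfl fun t _ => h t, Finset.sum_sub_distrib,
    Finset.sum_ite_eq' Finset.univ t₀]
  simp [pSY]

lemma pSY_splitP (P : S → Bool → T → ℝ) (t₀ : T) (β : ℝ) (s : S) (y : Bool) :
    pSY (splitP P t₀ β) s y = pSY P s y := by
  rw [pSY, sum_fin_succ_card, splitP_last,
    Finset.sum_congr rfl (fun t _ => splitP_iota P t₀ β s y t), Bmass_sum]
  ring

lemma pS_eq_sum_pSY (P : S → Bool → T → ℝ) (s : S) : pS P s = ∑ y, pSY P s y := rfl

lemma pS_splitP (P : S → Bool → T → ℝ) (t₀ : T) (β : ℝ) (s : S) :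
    pS (splitP P t₀ β) s = pS P s := by
  rw [pS_eq_sum_pSY, pS_eq_sum_pSY]
  exact Finset.sum_congr rfl fun y _ => pSY_splitP P t₀ β s y

lemma pST_splitP_last (P : S → Bool → T → ℝ) (t₀ : T) (β : ℝ) (s : S) :
    pST (splitP P t₀ β) s (Fin.last _) = β * pST P s t₀ := by
  rw [pST, Fintype.sum_bool, splitP_last, splitP_last, Amass_sum]

lemma pST_splitP_iota (P : S → Bool → T → ℝ) (t₀ : T) (β : ℝ) (s : S) (t : T) :
    pST (splitP P t₀ β) s (iota T t) =
      if t = t₀ then (1 - β) * pST P s t₀ else pST P s t := by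
  rw [pST, Fintype.sum_bool, splitP_iota, splitP_iota]
  unfold Bmass
  split
  · next h =>
    subst h
    have := Amass_sum P t β s
    rw [pST, Fintype.sum_bool] at *
    linarith
  · rw [pST, Fintype.sum_bool]

lemma pYT_splitP_last (P : S → Bool → T → ℝ) (t₀ : T) (β : ℝ) (y : Bool) :
    pYT (splitP P t₀ β) y (Fin.last _) = ∑ s, Amass P t₀ β s y := by
  rw [pYT]; exact Finset.sum_congr rfl fun s _ => splitP_last P t₀ β s y

lemma pYT_splitP_iota (P : S → Bool → T → ℝ) (t₀ : T) (β : ℝ) (y : Bool) (t : T) :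
    pYT (splitP P t₀ β) y (iota T t) =
      if t = t₀ then pYT P y t₀ - ∑ s, Amass P t₀ β s y else pYT P y t := by
  rw [pYT, Finset.sum_congr rfl (fun s _ => splitP_iota P t₀ β s y t)]
  unfold Bmass
  split
  · next h => subst h; rw [Finset.sum_sub_distrib, pYT]
  · rfl

lemma pST_nonneg (P : S → Bool → T → ℝ) (hP : ∀ s y t, 0 ≤ P s y t) (s : S) (t : T) :
    0 ≤ pST P s t :=
  Finset.sum_nonneg fun y _ => hP s y t

lemma splitP_nonneg (P : S → Bool → T → ℝ) (t₀ : T) (β : ℝ)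
    (hP : ∀ s y t, 0 ≤ P s y t) (hβ0 : 0 ≤ β) (hβ1 : β ≤ 1)
    (hβs : ∀ s, 0 < P s true t₀ → β * pST P s t₀ ≤ P s true t₀) :
    ∀ s y j, 0 ≤ splitP P t₀ β s y j := by
  have hA : ∀ s y, 0 ≤ Amass P t₀ β s y := by
    intro s y; unfold Amass
    have := mul_nonneg hβ0 (pST_nonneg P hP s t₀)
    split <;> split <;> simp [this]
  have hB : ∀ s y t, 0 ≤ Bmass P t₀ β s y t := by
    intro s y t; unfold Bmass
    split
    · next h =>
      subst h
      unfold Amass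
      by_cases h1 : 0 < P s true t
      · rw [if_pos h1]
        cases y
        · simpa using hP s false t
        · simpa using hβs s h1
      · rw [if_neg h1]
        have h1' : P s true t = 0 := le_antisymm (not_lt.1 h1) (hP s true t)
        cases y
        · have : pST P s t = P s false t := by rw [pST, Fintype.sum_bool, h1']; ring
          simp only [if_neg Bool.false_ne_true, this]
          nlinarith [hP s false t]
        · simpa using hP s true t
    · exact hP s y t
  intro s y j
  rcases fin_cases' j with h | ⟨t, h⟩
  · rw [h, splitP_last]; exact hA s y
  · rw [h, splitP_iota]; exact hB s y t

lemma infoStructure_splitP (P : S → Bool → T → ℝ) (t₀ : T) (β : ℝ)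
    (hP : InfoStructure P) (hβ0 : 0 ≤ β) (hβ1 : β ≤ 1)
    (hβs : ∀ s, 0 < P s true t₀ → β * pST P s t₀ ≤ P s true t₀) :
    InfoStructure (splitP P t₀ β) := by
  obtain ⟨hPnn, hPsum, hPS⟩ := hP
  refine ⟨splitP_nonneg P t₀ β hPnn hβ0 hβ1 hβs, ?_, ?_⟩
  · rw [show (∑ s, ∑ y, ∑ j, splitP P t₀ β s y j) = ∑ s, ∑ y, pSY P s y from
      Finset.sum_congr rfl fun s _ => Finset.sum_congr rfl fun y _ => pSY_splitP P t₀ β s y]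
    exact hPsum
  · intro s; rw [pS_splitP]; exact hPS s

lemma isIP_splitP (P : S → Bool → T → ℝ) (t₀ : T) (β : ℝ) (ε : ℝ)
    (hIP : IsIP ε P) (hβ0 : 0 ≤ β) (hβ1 : β ≤ 1) :
    IsIP ε (splitP P t₀ β) := by
  intro s₁ s₂ j
  have key : ∀ (c : ℝ), 0 ≤ c →
      c * condTS P t₀ s₁ ≤ Real.exp ε * (c * condTS P t₀ s₂) := by
    intro c hc
    have := mul_le_mul_of_nonneg_left (hIP s₁ s₂ t₀) hc
    calc c * condTS P t₀ s₁ ≤ c * (Real.exp ε * condTS P t₀ s₂) := this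
      _ = Real.exp ε * (c * condTS P t₀ s₂) := by ring
  rcases fin_cases' j with h | ⟨t, h⟩
  · subst h
    rw [condTS, condTS, pST_splitP_last, pST_splitP_last, pS_splitP, pS_splitP,
      mul_div_assoc, mul_div_assoc]
    exact key β hβ0
  · subst h
    rw [condTS, condTS, pST_splitP_iota, pST_splitP_iota, pS_splitP, pS_splitP]
    split
    · rw [mul_div_assoc, mul_div_assoc]
      exact key (1 - β) (by linarith)
    · exact hIP s₁ s₂ t

lemma blackwellDom_splitP (P : S → Bool → T → ℝ) (t₀ : T) (β : ℝ) :
    BlackwellDom (pYT (splitP P t₀ β)) (pYT P) := by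
  refine ⟨fun j t => if j = Fin.last _ then (if t = t₀ then 1 else 0)
    else (if j = iota T t then 1 else 0), ?_, ?_, ?_⟩
  · intro j t; dsimp only; split <;> split <;> norm_num
  · intro j
    rcases fin_cases' j with h | ⟨t', h⟩
    · subst h; simp
    · subst h
      rw [Finset.sum_congr rfl (fun t _ => if_neg (iota_ne_last t'))]
      rw [show (∑ t : T, if iota T t' = iota T t then (1:ℝ) else 0)
          = ∑ t : T, if t' = t then (1:ℝ) else 0 from
        Finset.sum_congr rfl fun t _ => by
          congr 1
          simp only [eq_iff_iff]
          exact ⟨fun h => iota_inj h, fun h => by rw [h]⟩]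
      simp
  · intro y t
    rw [sum_fin_succ_card (fun j => pYT (splitP P t₀ β) y j *
      (if j = Fin.last _ then (if t = t₀ then (1:ℝ) else 0)
        else (if j = iota T t then 1 else 0)))]
    simp only [if_pos rfl]
    rw [show (∑ t' : T, pYT (splitP P t₀ β) y (iota T t') *
        (if iota T t' = Fin.last _ then (if t = t₀ then (1:ℝ) else 0)
          else (if iota T t' = iota T t then 1 else 0)))
      = ∑ t' : T, pYT (splitP P t₀ β) y (iota T t') *
          (if iota T t' = iota T t then 1 else 0) from
      Finset.sum_congr rfl fun t' _ => by rw [if_neg (iota_ne_last t')]]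
    rw [show (∑ t' : T, pYT (splitP P t₀ β) y (iota T t') *
          (if iota T t' = iota T t then (1:ℝ) else 0))
        = ∑ t' : T, (if t' = t then pYT (splitP P t₀ β) y (iota T t') else 0) from
      Finset.sum_congr rfl fun t' _ => by
        by_cases h : t' = t
        · rw [if_pos h, if_pos (by rw [h]), mul_one]
        · rw [if_neg h, if_neg (fun hh => h (iota_inj hh)), mul_zero]]
    rw [Finset.sum_ite_eq' Finset.univ t]
    simp only [Finset.mem_univ, if_true]
    rw [pYT_splitP_iota, pYT_splitP_last]
    by_cases h : t = t₀
    · subst h; simp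
    · rw [if_neg h, if_neg h]; ring

lemma sum_if_single (f : T → ℝ) (t₀ : T) (c : ℝ) :
    ∑ t, (if t = t₀ then c else f t) = (∑ t, f t) - f t₀ + c := by
  have h : ∀ t, (if t = t₀ then c else f t) = f t + (if t = t₀ then c - f t₀ else 0) := by
    intro t
    by_cases h : t = t₀
    · subst h; simp
    · simp [h]
  rw [Finset.sum_congr rfl fun t _ => h t, Finset.sum_add_distrib,
    Finset.sum_ite_eq' Finset.univ t₀]
  simp only [Finset.mem_univ, if_true]
  ring

lemma Vfun_splitP (P : S → Bool → T → ℝ) (t₀ : T) (β : ℝ) (l : ℝ) :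
    Vfun l (pYT (splitP P t₀ β)) =
      Vfun l (pYT P) - max (l * pYT P true t₀) (pYT P false t₀)
      + max (l * (pYT P true t₀ - ∑ s, Amass P t₀ β s true))
            (pYT P false t₀ - ∑ s, Amass P t₀ β s false)
      + max (l * ∑ s, Amass P t₀ β s true) (∑ s, Amass P t₀ β s false) := by
  rw [Vfun, sum_fin_succ_card (fun j => max (l * pYT (splitP P t₀ β) true j)
    (pYT (splitP P t₀ β) false j))]
  rw [pYT_splitP_last, pYT_splitP_last]
  rw [show (∑ t, max (l * pYT (splitP P t₀ β) true (iota T t))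
        (pYT (splitP P t₀ β) false (iota T t)))
      = ∑ t, (if t = t₀ then max (l * (pYT P true t₀ - ∑ s, Amass P t₀ β s true))
            (pYT P false t₀ - ∑ s, Amass P t₀ β s false)
        else max (l * pYT P true t) (pYT P false t)) from
    Finset.sum_congr rfl fun t _ => by
      rw [pYT_splitP_iota, pYT_splitP_iota]
      by_cases h : t = t₀
      · rw [if_pos h, if_pos h, if_pos h]
      · rw [if_neg h, if_neg h, if_neg h]]
  rw [sum_if_single (fun t => max (l * pYT P true t) (pYT P false t)) t₀, Vfun]
  try ring


end Aux

set_option maxHeartbeats 1000000 in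
/-- any ε-IP Blackwell optimal information structure has
degenerate cell posteriors `P(Y=1|S=s,T=t) ∈ {0,1}` whenever `P(S=s,T=t) > 0`. -/
theorem statement0 {S T : Type} [Fintype S] [Fintype T]
    (ε : ℝ) (hε : 0 ≤ ε) (P : S → Bool → T → ℝ)
    (hopt : BlackwellOptimal ε P) :
    ∀ (s : S) (t : T), 0 < pST P s t →
      postYST P s t = 0 ∨ postYST P s t = 1 := by
  obtain ⟨hIS, hIP, hno⟩ := hopt
  obtain ⟨hPnn, hPsum, hPS⟩ := hIS
  intro s₀ t₀ hpos
  by_contra hcon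
  push_neg at hcon
  obtain ⟨h0, h1⟩ := hcon
  have hpstb : ∀ s, pST P s t₀ = P s true t₀ + P s false t₀ := fun s => by
    rw [pST, Fintype.sum_bool]
  -- cell positivity
  have hq : 0 < P s₀ true t₀ := by
    rcases lt_or_eq_of_le (hPnn s₀ true t₀) with h | h
    · exact h
    · exact absurd (by rw [postYST, ← h, zero_div]) h0
  have hp : 0 < P s₀ false t₀ := by
    rcases lt_or_eq_of_le (hPnn s₀ false t₀) with h | h
    · exact h
    · refine absurd ?_ h1
      rw [postYST]
      have : pST P s₀ t₀ = P s₀ true t₀ := by rw [hpstb, ← h, add_zero]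
      rw [this, div_self hq.ne']
  -- the splitting parameter β
  set F : Finset S := Finset.univ.filter (fun s => 0 < P s true t₀) with hF
  have hs₀F : s₀ ∈ F := by simp [hF, hq]
  have hFne : F.Nonempty := ⟨s₀, hs₀F⟩
  have hpSTpos : ∀ s ∈ F, 0 < pST P s t₀ := by
    intro s hs
    rw [hF, Finset.mem_filter] at hs
    rw [hpstb]
    nlinarith [hs.2, hPnn s false t₀]
  obtain ⟨β, hβ0, hβ1, hβs⟩ : ∃ β : ℝ, 0 < β ∧ β ≤ 1 ∧
      ∀ s, 0 < P s true t₀ → β * pST P s t₀ ≤ P s true t₀ := by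
    refine ⟨min 1 (F.inf' hFne (fun s => P s true t₀ / pST P s t₀)), ?_, min_le_left _ _, ?_⟩
    · refine lt_min one_pos ?_
      rw [Finset.lt_inf'_iff]
      intro s hs
      have hs' := hs
      rw [hF, Finset.mem_filter] at hs'
      exact div_pos hs'.2 (hpSTpos s hs)
    · intro s hs
      have hsF : s ∈ F := by simp [hF, hs]
      have hle : min 1 (F.inf' hFne (fun s => P s true t₀ / pST P s t₀))
          ≤ P s true t₀ / pST P s t₀ :=
        le_trans (min_le_right _ _) (Finset.inf'_le _ hsF)
      have hpos' := hpSTpos s hsF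
      calc _ ≤ (P s true t₀ / pST P s t₀) * pST P s t₀ :=
            mul_le_mul_of_nonneg_right hle hpos'.le
        _ = P s true t₀ := div_mul_cancel₀ _ hpos'.ne'
  -- key quantities
  set C1 : ℝ := pYT P true t₀ with hC1def
  set C0 : ℝ := pYT P false t₀ with hC0def
  set E : ℝ := ∑ s ∈ F, pST P s t₀ with hEdef
  set D : ℝ := ∑ s ∈ Fᶜ, pST P s t₀ with hDdef
  have hA1 : (∑ s, Amass P t₀ β s true) = β * E := by
    rw [show (∑ s, Amass P t₀ β s true)
        = ∑ s, (if 0 < P s true t₀ then β * pST P s t₀ else 0) from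
      Finset.sum_congr rfl fun s _ => by unfold Amass; split <;> simp]
    rw [← Finset.sum_filter, hEdef, Finset.mul_sum, hF]
  have hA0 : (∑ s, Amass P t₀ β s false) = β * D := by
    rw [show (∑ s, Amass P t₀ β s false)
        = ∑ s, (if ¬ 0 < P s true t₀ then β * pST P s t₀ else 0) from
      Finset.sum_congr rfl fun s _ => by unfold Amass; split <;> simp_all]
    rw [← Finset.sum_filter, hDdef, Finset.mul_sum, hF, Finset.compl_filter]
  have hC1F : C1 = ∑ s ∈ F, P s true t₀ := by
    rw [hC1def, pYT]
    refine (Finset.sum_subset (Finset.subset_univ F) ?_).symm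
    intro s _ hs
    rw [hF, Finset.mem_filter] at hs
    push_neg at hs
    exact le_antisymm (hs (Finset.mem_univ s)) (hPnn s true t₀)
  have hEC1 : C1 + P s₀ false t₀ ≤ E := by
    rw [hEdef, Finset.sum_congr rfl fun s _ => hpstb s, Finset.sum_add_distrib, ← hC1F]
    have : P s₀ false t₀ ≤ ∑ s ∈ F, P s false t₀ :=
      Finset.single_le_sum (fun s _ => hPnn s false t₀) hs₀F
    linarith
  have hDC0 : D ≤ C0 - P s₀ false t₀ := by
    have hsub : Fᶜ ⊆ Finset.univ.erase s₀ := by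
      intro s hs
      rw [Finset.mem_compl] at hs
      refine Finset.mem_erase.2 ⟨?_, Finset.mem_univ s⟩
      rintro rfl; exact hs hs₀F
    have hDF : D = ∑ s ∈ Fᶜ, P s false t₀ := by
      refine Finset.sum_congr rfl fun s hs => ?_
      rw [Finset.mem_compl, hF, Finset.mem_filter] at hs
      push_neg at hs
      have h0' : P s true t₀ = 0 :=
        le_antisymm (hs (Finset.mem_univ s)) (hPnn s true t₀)
      rw [hpstb, h0', zero_add]
    have h1' : (∑ s ∈ Fᶜ, P s false t₀) ≤ ∑ s ∈ Finset.univ.erase s₀, P s false t₀ :=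
      Finset.sum_le_sum_of_subset_of_nonneg hsub (fun s _ _ => hPnn s false t₀)
    have h2' : (∑ s ∈ Finset.univ.erase s₀, P s false t₀) + P s₀ false t₀
        = ∑ s, P s false t₀ := Finset.sum_erase_add _ _ (Finset.mem_univ s₀)
    have h3' : (∑ s, P s false t₀) = C0 := by rw [hC0def, pYT]
    rw [hDF]
    linarith
  have hED : E + D = C1 + C0 := by
    have h3' : (∑ s, pST P s t₀) = C1 + C0 := by
      rw [Finset.sum_congr rfl fun s _ => hpstb s, Finset.sum_add_distrib,
        hC1def, hC0def, pYT, pYT]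
    rw [hEdef, hDdef, ← h3', hF, Finset.compl_filter, Finset.sum_filter_add_sum_filter_not]
  have hC1pos : 0 < C1 := by
    have : P s₀ true t₀ ≤ C1 :=
      Finset.single_le_sum (fun s _ => hPnn s true t₀) (Finset.mem_univ s₀)
    linarith
  have hC0pos : 0 < C0 := by
    have : P s₀ false t₀ ≤ C0 :=
      Finset.single_le_sum (fun s _ => hPnn s false t₀) (Finset.mem_univ s₀)
    linarith
  have hDnn : 0 ≤ D :=
    Finset.sum_nonneg fun s _ => pST_nonneg P hPnn s t₀
  have hEpos : 0 < E := by linarith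
  have key : D * C1 < C0 * E := by
    nlinarith [mul_le_mul_of_nonneg_right hDC0 hC1pos.le,
      mul_le_mul_of_nonneg_left hEC1 hC0pos.le,
      mul_pos hp (add_pos hC0pos hC1pos)]
  -- the separating slope
  obtain ⟨l, hlE, hlC⟩ : ∃ l : ℝ, D < l * E ∧ l * C1 < C0 := by
    have hden : 0 < E + C1 := by linarith
    refine ⟨(D + C0) / (E + C1), ?_, ?_⟩
    · rw [div_mul_eq_mul_div, lt_div_iff₀ hden]
      nlinarith [key]
    · rw [div_mul_eq_mul_div, div_lt_iff₀ hden]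
      nlinarith [key]
  -- strict Vfun increase
  have hstep1 : (∑ s, Amass P t₀ β s false) < l * ∑ s, Amass P t₀ β s true := by
    rw [hA1, hA0]
    nlinarith [mul_lt_mul_of_pos_left hlE hβ0]
  have hstep2 : l * (C1 - ∑ s, Amass P t₀ β s true)
      < C0 - ∑ s, Amass P t₀ β s false := by
    rw [hA1, hA0]
    nlinarith [mul_lt_mul_of_pos_left hlE hβ0]
  have hstrict : Vfun l (pYT P) < Vfun l (pYT (splitP P t₀ β)) := by
    rw [Vfun_splitP]
    rw [max_eq_left hstep1.le, max_eq_right hstep2.le]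
    have hmax : max (l * C1) C0 < (C0 - ∑ s, Amass P t₀ β s false)
        + l * ∑ s, Amass P t₀ β s true := by
      refine max_lt ?_ ?_
      · nlinarith [hstep2]
      · nlinarith [hstep1]
    rw [← hC1def, ← hC0def]
    linarith
  -- contradiction with optimality
  exact hno ⟨Fintype.card T + 1, splitP P t₀ β,
    infoStructure_splitP P t₀ β ⟨hPnn, hPsum, hPS⟩ hβ0.le hβ1 hβs,
    isIP_splitP P t₀ β ε hIP hβ0.le hβ1,
    fun s y => pSY_splitP P t₀ β s y,
    blackwellDom_splitP P t₀ β,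
    fun h => absurd (V_mono (l := l) h) (not_le.2 hstrict)⟩



end IPPaper
end
end

section
/- For ε>0 and a binary-secret prior with 0 < q_{s₁} ≤ q_{s₀} < 1, the feasible set is nonempty, it contains a unique feasible dominant point l*, and for every convex u:[0,1]→ℝ the feasible dominant point l* maximizes the expected utility U(l) over all feasible l. -/
open Real
open scoped Classical

noncomputable section

namespace IPPaper

/-- Feasibility conditions for the cell widths `l i j = P(T = t_{i+1} | S = s_j)`
(Lemma 5.1 of the paper), with parameters `ε`, `q0 = q_{s₀}`, `q1 = q_{s₁}`. -/
def Feasible (ε q0 q1 : ℝ) (l : Fin 4 → Fin 2 → ℝ) : Prop :=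
  l 0 1 = q1 ∧ l 3 0 = 1 - q0 ∧
  l 1 0 = Real.exp ε * l 1 1 ∧ l 2 1 = Real.exp ε * l 2 0 ∧
  Real.exp (-ε) * l 0 1 ≤ l 0 0 ∧ l 0 0 ≤ Real.exp ε * l 0 1 ∧
  Real.exp (-ε) * l 3 0 ≤ l 3 1 ∧ l 3 1 ≤ Real.exp ε * l 3 0 ∧
  (∀ j : Fin 2, ∑ i : Fin 4, l i j = 1) ∧
  (∀ (i : Fin 4) (j : Fin 2), 0 ≤ l i j)

/-- The feasible dominant point: feasible and simultaneously maximizing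
`l₁^{(0)}` and `l₄^{(1)}` among feasible points. -/
def DominantPoint (ε q0 q1 : ℝ) (l : Fin 4 → Fin 2 → ℝ) : Prop :=
  Feasible ε q0 q1 l ∧
  ∀ l', Feasible ε q0 q1 l' → l' 0 0 ≤ l 0 0 ∧ l' 3 1 ≤ l 3 1

/-- Expected utility associated to a feasible point: signal probabilities
`p_{t_i} = π₀·l_i^{(0)} + π₁·l_i^{(1)}` and posteriors
`q_{t₁}=1`, `q_{t₂}=e^ε·π₀/(e^ε·π₀+π₁)`, `q_{t₃}=π₀/(π₀+e^ε·π₁)`, `q_{t₄}=0`. -/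
def Ufun (ε π0 π1 : ℝ) (u : ℝ → ℝ) (l : Fin 4 → Fin 2 → ℝ) : ℝ :=
  (π0 * l 0 0 + π1 * l 0 1) * u 1 +
  (π0 * l 1 0 + π1 * l 1 1) * u (Real.exp ε * π0 / (Real.exp ε * π0 + π1)) +
  (π0 * l 2 0 + π1 * l 2 1) * u (π0 / (π0 + Real.exp ε * π1)) +
  (π0 * l 3 0 + π1 * l 3 1) * u 0

end IPPaper


namespace IPPaper

private lemma feas_eqs {ε q0 q1 : ℝ} {l : Fin 4 → Fin 2 → ℝ}
    (h : Feasible ε q0 q1 l) :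
    l 0 0 = q0 - (Real.exp ε * l 1 1 + l 2 0) ∧
    l 3 1 = 1 - q1 - (l 1 1 + Real.exp ε * l 2 0) := by
  obtain ⟨h1, h2, h3, h4, -, -, -, -, h9, -⟩ := h
  have e0 := h9 0
  have e1 := h9 1
  rw [Fin.sum_univ_four] at e0 e1
  rw [h2, h3] at e0
  rw [h1, h4] at e1
  constructor <;> linarith

end IPPaper

namespace IPPaper

set_option maxHeartbeats 1000000 in
/-- the feasible set is nonempty, contains a unique feasible
dominant point, and the dominant point maximizes expected utility for every
convex utility function. -/
theorem statement5 (ε π0 π1 q0 q1 : ℝ)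
    (hε : 0 < ε) (hπ0 : 0 < π0) (hπ1 : 0 < π1) (hπ : π0 + π1 = 1)
    (hq1 : 0 < q1) (hq01 : q1 ≤ q0) (hq0 : q0 < 1) :
    (∃ l, Feasible ε q0 q1 l) ∧
    (∃! l, DominantPoint ε q0 q1 l) ∧
    (∀ lstar, DominantPoint ε q0 q1 lstar →
      ∀ u : ℝ → ℝ, ConvexOn ℝ (Set.Icc 0 1) u →
        ∀ l, Feasible ε q0 q1 l → Ufun ε π0 π1 u l ≤ Ufun ε π0 π1 u lstar) := by
  have hE1 : 1 < Real.exp ε := by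
    have h := Real.add_one_le_exp ε; linarith
  have hE0 : (0:ℝ) < Real.exp ε := Real.exp_pos ε
  set E := Real.exp ε with hEdef
  have hEneg : Real.exp (-ε) = 1/E := by rw [Real.exp_neg, one_div, hEdef]
  have hE2 : (0:ℝ) < E^2 - 1 := by nlinarith
  set A0 := q0 - E * q1 with hA0def
  set B0 := 1 - q1 - E * (1 - q0) with hB0def
  set α := max A0 (max (B0/E) 0) with hαdef
  set β := max B0 (max (A0/E) 0) with hβdef
  have hα0 : 0 ≤ α := le_max_of_le_right (le_max_right _ _)
  have hβ0 : 0 ≤ β := le_max_of_le_right (le_max_right _ _)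
  have hαA0 : A0 ≤ α := le_max_left _ _
  have hαB0 : B0/E ≤ α := le_max_of_le_right (le_max_left _ _)
  have hβB0 : B0 ≤ β := le_max_left _ _
  have hβA0 : A0/E ≤ β := le_max_of_le_right (le_max_left _ _)
  have hβEα : β ≤ E * α := by
    apply max_le
    · have : B0 = E * (B0/E) := by field_simp
      rw [this]
      exact mul_le_mul_of_nonneg_left hαB0 hE0.le
    · apply max_le
      · rcases le_or_gt A0 0 with h | h
        · have h2 : A0/E ≤ 0 := div_nonpos_of_nonpos_of_nonneg (by linarith) hE0.le
          nlinarith [mul_nonneg hE0.le hα0]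
        · have h1 : A0/E ≤ A0 := by
            rw [div_le_iff₀ hE0]; nlinarith [mul_pos h hE0]
          nlinarith [mul_le_mul_of_nonneg_left hαA0 hE0.le, mul_le_mul_of_nonneg_left h.le hE0.le]
      · exact mul_nonneg hE0.le hα0
  have hαEβ : α ≤ E * β := by
    apply max_le
    · have : A0 = E * (A0/E) := by field_simp
      rw [this]
      exact mul_le_mul_of_nonneg_left hβA0 hE0.le
    · apply max_le
      · rcases le_or_gt B0 0 with h | h
        · have h2 : B0/E ≤ 0 := div_nonpos_of_nonpos_of_nonneg (by linarith) hE0.le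
          nlinarith [mul_nonneg hE0.le hβ0]
        · have h1 : B0/E ≤ B0 := by
            rw [div_le_iff₀ hE0]; nlinarith [mul_pos h hE0]
          nlinarith [mul_le_mul_of_nonneg_left hβB0 hE0.le, mul_le_mul_of_nonneg_left h.le hE0.le]
      · exact mul_nonneg hE0.le hβ0
  have hq1E : q1/E ≤ q1 := by
    rw [div_le_iff₀ hE0]; exact le_mul_of_one_le_right hq1.le hE1.le
  have hq0E : (1-q0)/E ≤ 1-q0 := by
    rw [div_le_iff₀ hE0]; exact le_mul_of_one_le_right (by linarith) hE1.le
  have hαA1 : α ≤ q0 - q1/E := by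
    apply max_le
    · rw [hA0def]; nlinarith [mul_pos hE0 hq1]
    · apply max_le
      · rw [div_le_iff₀ hE0, hB0def]
        have heq : (q0 - q1/E) * E = q0*E - q1 := by field_simp
        rw [heq]; nlinarith [mul_le_mul_of_nonneg_right hq0.le hE0.le]
      · linarith
  have hβB1 : β ≤ 1 - q1 - (1-q0)/E := by
    apply max_le
    · rw [hB0def]; nlinarith [mul_pos hE0 (show (0:ℝ) < 1 - q0 by linarith)]
    · apply max_le
      · rw [div_le_iff₀ hE0, hA0def]
        have heq : (1 - q1 - (1-q0)/E) * E = (1-q1)*E - (1-q0) := by field_simp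
        rw [heq]; nlinarith [mul_le_mul_of_nonneg_right (show q1 ≤ 1 by linarith) hE0.le]
      · linarith
  set as := (E*α - β)/(E^2-1) with hasdef
  set bs := (E*β - α)/(E^2-1) with hbsdef
  have has : 0 ≤ as := div_nonneg (by linarith) hE2.le
  have hbs : 0 ≤ bs := div_nonneg (by linarith) hE2.le
  have hab1 : E*as + bs = α := by
    rw [hasdef, hbsdef]; field_simp; ring
  have hab2 : as + E*bs = β := by
    rw [hasdef, hbsdef]; field_simp; ring
  set lstar : Fin 4 → Fin 2 → ℝ :=
    ![![q0 - α, q1], ![E*as, as], ![bs, E*bs], ![1-q0, 1-q1-β]] with hlstardef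
  have hl00 : lstar 0 0 = q0 - α := rfl
  have hl01 : lstar 0 1 = q1 := rfl
  have hl10 : lstar 1 0 = E*as := rfl
  have hl11 : lstar 1 1 = as := rfl
  have hl20 : lstar 2 0 = bs := rfl
  have hl21 : lstar 2 1 = E*bs := rfl
  have hl30 : lstar 3 0 = 1-q0 := rfl
  have hl31 : lstar 3 1 = 1-q1-β := rfl
  have hfeas : Feasible ε q0 q1 lstar := by
    refine ⟨hl01, hl30, by rw [hl10, hl11], by rw [hl21, hl20], ?_, ?_, ?_, ?_, ?_, ?_⟩
    · show Real.exp (-ε) * q1 ≤ q0 - α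
      rw [hEneg]
      have h : 1/E * q1 = q1/E := by ring
      rw [h]; linarith
    · show q0 - α ≤ E * q1
      have h := hαA0; rw [hA0def] at h; linarith
    · show Real.exp (-ε) * (1 - q0) ≤ 1 - q1 - β
      rw [hEneg]
      have h : 1/E * (1-q0) = (1-q0)/E := by ring
      rw [h]; linarith
    · show 1 - q1 - β ≤ E * (1 - q0)
      have h := hβB0; rw [hB0def] at h; linarith
    · intro j
      fin_cases j <;> rw [Fin.sum_univ_four]
      · show q0 - α + E*as + bs + (1-q0) = 1
        linarith
      · show q1 + as + E*bs + (1-q1-β) = 1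
        linarith
    · intro i j
      have hq1E' : 0 < q1/E := div_pos hq1 hE0
      have hq0E' : 0 < (1-q0)/E := div_pos (by linarith) hE0
      fin_cases i <;> fin_cases j
      · show 0 ≤ q0 - α; linarith
      · show 0 ≤ q1; linarith
      · exact mul_nonneg hE0.le has
      · exact has
      · exact hbs
      · exact mul_nonneg hE0.le hbs
      · show 0 ≤ 1-q0; linarith
      · show 0 ≤ 1-q1-β; linarith
  -- dominance of lstar
  have hdom : ∀ l', Feasible ε q0 q1 l' → l' 0 0 ≤ lstar 0 0 ∧ l' 3 1 ≤ lstar 3 1 := by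
    intro l' hf
    obtain ⟨g1, g2, g3, g4, g5, g6, g7, g8, g9, g10⟩ := hf
    obtain ⟨e0, e1⟩ := feas_eqs ⟨g1, g2, g3, g4, g5, g6, g7, g8, g9, g10⟩
    rw [← hEdef] at e0 e1 g3 g4 g6 g8
    rw [g1] at g6
    rw [g2] at g8
    have ha' : 0 ≤ l' 1 1 := g10 1 1
    have hb' : 0 ≤ l' 2 0 := g10 2 0
    have hX : A0 ≤ E * l' 1 1 + l' 2 0 := by rw [hA0def]; linarith [e0, g6]
    have hY : B0 ≤ l' 1 1 + E * l' 2 0 := by rw [hB0def]; linarith [e1, g8]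
    have hXα : α ≤ E * l' 1 1 + l' 2 0 := by
      apply max_le hX
      apply max_le
      · rw [div_le_iff₀ hE0]
        have hkey : (E * l' 1 1 + l' 2 0) * E
            = l' 1 1 * (E^2-1) + (l' 1 1 + E * l' 2 0) := by ring
        rw [hkey]
        have h2 := mul_nonneg ha' hE2.le
        linarith
      · have := mul_nonneg hE0.le ha'; linarith
    have hYβ : β ≤ l' 1 1 + E * l' 2 0 := by
      apply max_le hY
      apply max_le
      · rw [div_le_iff₀ hE0]
        have hkey : (l' 1 1 + E * l' 2 0) * E
            = l' 2 0 * (E^2-1) + (E * l' 1 1 + l' 2 0) := by ring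
        rw [hkey]
        have h2 := mul_nonneg hb' hE2.le
        linarith
      · have := mul_nonneg hE0.le hb'; linarith
    rw [hl00, hl31]
    constructor <;> linarith
  have hdp : DominantPoint ε q0 q1 lstar := ⟨hfeas, hdom⟩
  -- general utility lemma (abstract dominant point)
  have hutil : ∀ ls, DominantPoint ε q0 q1 ls →
      ∀ u : ℝ → ℝ, ConvexOn ℝ (Set.Icc 0 1) u →
        ∀ l, Feasible ε q0 q1 l → Ufun ε π0 π1 u l ≤ Ufun ε π0 π1 u ls := by
    intro ls hls u hu l hfl
    obtain ⟨hlsf, hlsd⟩ := hls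
    obtain ⟨dle1, dle2⟩ := hlsd l hfl
    obtain ⟨me0, me1⟩ := feas_eqs hlsf
    obtain ⟨ke0, ke1⟩ := feas_eqs hfl
    obtain ⟨m1, m2, m3, m4, -, -, -, -, -, -⟩ := hlsf
    obtain ⟨k1, k2, k3, k4, -, -, -, -, -, -⟩ := hfl
    rw [← hEdef] at me0 me1 ke0 ke1 m3 m4 k3 k4
    -- dominance in (a,b) coordinates
    have hP : 0 ≤ E * (l 1 1 - ls 1 1) + (l 2 0 - ls 2 0) := by
      rw [me0, ke0] at dle1; linarith
    have hQ : 0 ≤ (l 1 1 - ls 1 1) + E * (l 2 0 - ls 2 0) := by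
      rw [me1, ke1] at dle2; linarith
    -- convexity facts
    have hD2 : (0:ℝ) < E*π0 + π1 := by positivity
    have hD3 : (0:ℝ) < π0 + E*π1 := by positivity
    have hmem1 : (1:ℝ) ∈ Set.Icc (0:ℝ) 1 := by norm_num
    have hmem0 : (0:ℝ) ∈ Set.Icc (0:ℝ) 1 := by norm_num
    have hmemx2 : E*π0/(E*π0+π1) ∈ Set.Icc (0:ℝ) 1 := by
      constructor
      · positivity
      · rw [div_le_one hD2]; linarith
    have hmemx3 : π0/(π0+E*π1) ∈ Set.Icc (0:ℝ) 1 := by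
      constructor
      · positivity
      · rw [div_le_one hD3]; linarith [mul_pos hE0 hπ1]
    have key1 : u (E*π0/(E*π0+π1)) * (E*π0+π1) ≤ E*π0*u 1 + π1*u 0 := by
      have h := hu.2 hmem1 hmem0
        (show (0:ℝ) ≤ E*π0/(E*π0+π1) by positivity)
        (show (0:ℝ) ≤ π1/(E*π0+π1) by positivity)
        (show E*π0/(E*π0+π1) + π1/(E*π0+π1) = 1 by field_simp)
      simp only [smul_eq_mul, mul_one, mul_zero, add_zero] at h
      rw [show E*π0/(E*π0+π1) * u 1 + π1/(E*π0+π1) * u 0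
          = (E*π0*u 1 + π1*u 0)/(E*π0+π1) by ring] at h
      rw [← le_div_iff₀ hD2]
      exact h
    have key2 : u (π0/(π0+E*π1)) * (π0+E*π1) ≤ π0*u 1 + E*π1*u 0 := by
      have h := hu.2 hmem1 hmem0
        (show (0:ℝ) ≤ π0/(π0+E*π1) by positivity)
        (show (0:ℝ) ≤ E*π1/(π0+E*π1) by positivity)
        (show π0/(π0+E*π1) + E*π1/(π0+E*π1) = 1 by field_simp)
      simp only [smul_eq_mul, mul_one, mul_zero, add_zero] at h
      rw [show π0/(π0+E*π1) * u 1 + E*π1/(π0+E*π1) * u 0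
          = (π0*u 1 + E*π1*u 0)/(π0+E*π1) by ring] at h
      rw [← le_div_iff₀ hD3]
      exact h
    have key3 : u (E*π0/(E*π0+π1)) * (E*(E*π0+π1)) ≤
        (π0+E*π1) * u (π0/(π0+E*π1)) + π0*(E^2-1)*u 1 := by
      have h := hu.2 hmemx3 hmem1
        (show (0:ℝ) ≤ (π0+E*π1)/(E*(E*π0+π1)) by positivity)
        (show (0:ℝ) ≤ π0*(E^2-1)/(E*(E*π0+π1)) from
          div_nonneg (mul_nonneg hπ0.le hE2.le) (by positivity))
        (show (π0+E*π1)/(E*(E*π0+π1)) + π0*(E^2-1)/(E*(E*π0+π1)) = 1 by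
          field_simp; ring)
      simp only [smul_eq_mul, mul_one] at h
      rw [show (π0+E*π1)/(E*(E*π0+π1)) * (π0/(π0+E*π1)) + π0*(E^2-1)/(E*(E*π0+π1))
          = E*π0/(E*π0+π1) by field_simp; ring] at h
      rw [show (π0+E*π1)/(E*(E*π0+π1)) * u (π0/(π0+E*π1)) + π0*(E^2-1)/(E*(E*π0+π1)) * u 1
          = ((π0+E*π1) * u (π0/(π0+E*π1)) + π0*(E^2-1)*u 1)/(E*(E*π0+π1)) by ring] at h
      rw [← le_div_iff₀ (by positivity : (0:ℝ) < E*(E*π0+π1))]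
      exact h
    have key4 : u (π0/(π0+E*π1)) * (E*(π0+E*π1)) ≤
        (E*π0+π1) * u (E*π0/(E*π0+π1)) + π1*(E^2-1)*u 0 := by
      have h := hu.2 hmemx2 hmem0
        (show (0:ℝ) ≤ (E*π0+π1)/(E*(π0+E*π1)) by positivity)
        (show (0:ℝ) ≤ π1*(E^2-1)/(E*(π0+E*π1)) from
          div_nonneg (mul_nonneg hπ1.le hE2.le) (by positivity))
        (show (E*π0+π1)/(E*(π0+E*π1)) + π1*(E^2-1)/(E*(π0+E*π1)) = 1 by
          field_simp; ring)
      simp only [smul_eq_mul, mul_zero, add_zero] at h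
      rw [show (E*π0+π1)/(E*(π0+E*π1)) * (E*π0/(E*π0+π1)) = π0/(π0+E*π1)
          by field_simp] at h
      rw [show (E*π0+π1)/(E*(π0+E*π1)) * u (E*π0/(E*π0+π1)) + π1*(E^2-1)/(E*(π0+E*π1)) * u 0
          = ((E*π0+π1) * u (E*π0/(E*π0+π1)) + π1*(E^2-1)*u 0)/(E*(π0+E*π1)) by ring] at h
      rw [← le_div_iff₀ (by positivity : (0:ℝ) < E*(π0+E*π1))]
      exact h
    have expand : Ufun ε π0 π1 u ls - Ufun ε π0 π1 u l =
        (E*π0*u 1 + π1*u 0 - (E*π0+π1) * u (E*π0/(E*π0+π1))) * (l 1 1 - ls 1 1)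
        + (π0*u 1 + E*π1*u 0 - (π0+E*π1) * u (π0/(π0+E*π1))) * (l 2 0 - ls 2 0) := by
      simp only [Ufun, ← hEdef]
      rw [me0, me1, ke0, ke1, m1, m2, m3, m4, k1, k2, k3, k4]
      ring
    have P1 : 0 ≤ ((π0+E*π1) * u (π0/(π0+E*π1)) + π0*(E^2-1)*u 1
        - u (E*π0/(E*π0+π1)) * (E*(E*π0+π1))) * (E * (l 1 1 - ls 1 1) + (l 2 0 - ls 2 0)) :=
      mul_nonneg (by linarith) hP
    have P2 : 0 ≤ ((E*π0+π1) * u (E*π0/(E*π0+π1)) + π1*(E^2-1)*u 0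
        - u (π0/(π0+E*π1)) * (E*(π0+E*π1))) * ((l 1 1 - ls 1 1) + E * (l 2 0 - ls 2 0)) :=
      mul_nonneg (by linarith) hQ
    have iden : (E^2-1) * (Ufun ε π0 π1 u ls - Ufun ε π0 π1 u l) =
        ((π0+E*π1) * u (π0/(π0+E*π1)) + π0*(E^2-1)*u 1
          - u (E*π0/(E*π0+π1)) * (E*(E*π0+π1))) * (E * (l 1 1 - ls 1 1) + (l 2 0 - ls 2 0))
        + ((E*π0+π1) * u (E*π0/(E*π0+π1)) + π1*(E^2-1)*u 0
          - u (π0/(π0+E*π1)) * (E*(π0+E*π1))) * ((l 1 1 - ls 1 1) + E * (l 2 0 - ls 2 0)) := by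
      rw [expand]; ring
    have hfinal : 0 ≤ (E^2-1) * (Ufun ε π0 π1 u ls - Ufun ε π0 π1 u l) := by
      rw [iden]; exact add_nonneg P1 P2
    have hd : 0 ≤ Ufun ε π0 π1 u ls - Ufun ε π0 π1 u l :=
      (mul_nonneg_iff_of_pos_left hE2).mp hfinal
    linarith
  refine ⟨⟨lstar, hfeas⟩, ⟨lstar, hdp, ?_⟩, hutil⟩
  -- uniqueness
  intro y hy
  obtain ⟨hyf, hyd⟩ := hy
  have h1 := hyd lstar hfeas
  have h2 := hdom y hyf
  have hy00 : y 0 0 = q0 - α := by rw [hl00] at h1 h2; linarith [h1.1, h2.1]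
  have hy31 : y 3 1 = 1 - q1 - β := by rw [hl31] at h1 h2; linarith [h1.2, h2.2]
  obtain ⟨we0, we1⟩ := feas_eqs hyf
  obtain ⟨w1, w2, w3, w4, -, -, -, -, -, -⟩ := hyf
  rw [← hEdef] at we0 we1 w3 w4
  have eq1 : E * y 1 1 + y 2 0 = α := by rw [hy00] at we0; linarith
  have eq2 : y 1 1 + E * y 2 0 = β := by rw [hy31] at we1; linarith
  have hya : y 1 1 = as := by
    have h3 : (E^2 - 1) * (y 1 1 - as) = 0 := by
      linear_combination E * eq1 - eq2 - E * hab1 + hab2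
    have := mul_eq_zero.mp h3
    rcases this with h | h
    · exact absurd h (ne_of_gt hE2)
    · linarith
  have hyb : y 2 0 = bs := by
    have h3 : (E^2 - 1) * (y 2 0 - bs) = 0 := by
      linear_combination E * eq2 - eq1 - E * hab2 + hab1
    have := mul_eq_zero.mp h3
    rcases this with h | h
    · exact absurd h (ne_of_gt hE2)
    · linarith
  funext i j
  fin_cases i <;> fin_cases j
  · show y 0 0 = lstar 0 0
    rw [hy00, hl00]
  · show y 0 1 = lstar 0 1
    rw [w1, hl01]
  · show y 1 0 = lstar 1 0
    rw [w3, hya, hl10]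
  · show y 1 1 = lstar 1 1
    rw [hya, hl11]
  · show y 2 0 = lstar 2 0
    rw [hyb, hl20]
  · show y 2 1 = lstar 2 1
    rw [w4, hyb, hl21]
  · show y 3 0 = lstar 3 0
    rw [w2, hl30]
  · show y 3 1 = lstar 3 1
    rw [hy31, hl31]

end IPPaper
end
end

section
/- Fix ε>0 and a binary-secret prior with 0 < q_{s₁} ≤ q_{s₀} < 1, and set R₁ = q_{s₀}/q_{s₁} and R₂ = (1−q_{s₁})/(1−q_{s₀}). The feasible dominant point l* satisfies: (a) if R₁ ≤ e^ε and R₂ ≤ e^ε then l*₂^{(1)} = l*₃^{(1)} = 0; (b) if (R₁ ≤ e^ε and R₂ > e^ε) or (R₁ > e^ε, R₂ > e^ε and q_{s₁} ≥ 1/(1+e^ε)) then l*₂^{(1)} = 0 and l*₃^{(1)} = 1 − q_{s₁} − e^ε·(1−q_{s₀}); (c) if (R₁ > e^ε and R₂ ≤ e^ε) or (R₁ > e^ε, R₂ > e^ε and q_{s₀} ≤ 1/(1+e^{−ε})) then l*₂^{(1)} = e^{−ε}·q_{s₀} − q_{s₁} and l*₃^{(1)} = 0; (d) if R₁ > e^ε,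 R₂ > e^ε, q_{s₀} > 1/(1+e^{−ε}) and q_{s₁} < 1/(1+e^ε) then l*₂^{(1)} = 1/(e^ε+1) − q_{s₁} and l*₃^{(1)} = e^ε·q_{s₀} − e^{2ε}/(e^ε+1). -/
open Real
open scoped Classical

noncomputable section

namespace IPPaper

private lemma exp_mul_exp_neg' (ε : ℝ) : Real.exp ε * Real.exp (-ε) = 1 := by
  rw [← Real.exp_add]; simp

private lemma zero_of' (E x : ℝ) (hE : 1 < E) (hx : 0 ≤ x) (h : (E * E - 1) * x = 0) :
    x = 0 := by
  have h1 : E * E - 1 ≠ 0 := by nlinarith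
  rcases mul_eq_zero.mp h with h' | h'
  · exact absurd h' h1
  · exact h'

private lemma one_lt_sq' {E : ℝ} (h : 1 < E) : 1 < E * E := by nlinarith

private lemma F_lt_one' {E F : ℝ} (hF : 0 < F) (hEF : E * F = 1) (hE : 1 < E) : F < 1 := by
  nlinarith

private lemma div_fact1' {E x : ℝ} (hE : 1 < E) (h : E - 1 ≤ (E * E - 1) * x) :
    1 ≤ (E + 1) * x := by nlinarith

private lemma div_fact2' {E x : ℝ} (hE : 1 < E) (h : (E * E - 1) * x ≤ E * (E - 1)) :
    x * (E + 1) ≤ E := by nlinarith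

private lemma b2' {E F q1 : ℝ} (hE : 1 < E) (hEF : E * F = 1) (h : 1 ≤ (E + 1) * q1) :
    1 - F * (1 - q1) ≤ E * q1 := by
  have key : E * (1 - F * (1 - q1)) = E - (1 - q1) := by linear_combination (q1 - 1) * hEF
  have h3 : E * (1 - F * (1 - q1)) ≤ E * (E * q1) := by rw [key]; nlinarith [h, hE]
  exact le_of_mul_le_mul_left h3 (by linarith)

private lemma c4' {E F q0 : ℝ} (hE : 1 < E) (hEF : E * F = 1) (h : q0 * (E + 1) ≤ E) :
    1 - F * q0 ≤ E * (1 - q0) := by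
  have key : E * (1 - F * q0) = E - q0 := by linear_combination (-q0) * hEF
  have h3 : E * (1 - F * q0) ≤ E * (E * (1 - q0)) := by rw [key]; nlinarith [h, hE]
  exact le_of_mul_le_mul_left h3 (by linarith)

private lemma feasible_mk (ε q0 q1 a0 b0 b1 c0 c1 d1 : ℝ)
    (hq1 : 0 ≤ q1) (hq0 : q0 ≤ 1)
    (hb : b0 = Real.exp ε * b1) (hc : c1 = Real.exp ε * c0)
    (h1 : Real.exp (-ε) * q1 ≤ a0) (h2 : a0 ≤ Real.exp ε * q1)
    (h3 : Real.exp (-ε) * (1 - q0) ≤ d1) (h4 : d1 ≤ Real.exp ε * (1 - q0))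
    (hs0 : a0 + b0 + c0 + (1 - q0) = 1) (hs1 : q1 + b1 + c1 + d1 = 1)
    (na : 0 ≤ a0) (nb : 0 ≤ b1) (nc : 0 ≤ c0) (nd : 0 ≤ d1) :
    Feasible ε q0 q1 ![![a0, q1], ![b0, b1], ![c0, c1], ![1 - q0, d1]] := by
  have hE : (0 : ℝ) < Real.exp ε := Real.exp_pos ε
  refine ⟨by simp, by simp, by simpa using hb, by simpa using hc, by simpa using h1,
    by simpa using h2, by simpa using h3, by simpa using h4, ?_, ?_⟩
  · intro j
    fin_cases j <;> simp [Fin.sum_univ_four] <;> linarith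
  · intro i j
    fin_cases i <;> fin_cases j <;>
      simp [hb, hc] <;>
      first
        | assumption
        | linarith [mul_nonneg hE.le nb, mul_nonneg hE.le nc]

set_option maxHeartbeats 1000000 in
/-- closed form of the feasible dominant point
(`l₂^{(1)} = l 1 1`, `l₃^{(1)} = l 2 1`), by cases on
`R₁ = q₀/q₁` and `R₂ = (1-q₁)/(1-q₀)`. -/
theorem statement6 (ε q0 q1 : ℝ)
    (hε : 0 < ε) (hq1 : 0 < q1) (hq01 : q1 ≤ q0) (hq0 : q0 < 1)
    (l : Fin 4 → Fin 2 → ℝ) (hl : DominantPoint ε q0 q1 l) :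
    -- (a)
    (q0 / q1 ≤ Real.exp ε ∧ (1 - q1) / (1 - q0) ≤ Real.exp ε →
      l 1 1 = 0 ∧ l 2 1 = 0) ∧
    -- (b)
    ((q0 / q1 ≤ Real.exp ε ∧ Real.exp ε < (1 - q1) / (1 - q0)) ∨
     (Real.exp ε < q0 / q1 ∧ Real.exp ε < (1 - q1) / (1 - q0) ∧
        1 / (1 + Real.exp ε) ≤ q1) →
      l 1 1 = 0 ∧ l 2 1 = 1 - q1 - Real.exp ε * (1 - q0)) ∧
    -- (c)
    ((Real.exp ε < q0 / q1 ∧ (1 - q1) / (1 - q0) ≤ Real.exp ε) ∨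
     (Real.exp ε < q0 / q1 ∧ Real.exp ε < (1 - q1) / (1 - q0) ∧
        q0 ≤ 1 / (1 + Real.exp (-ε))) →
      l 1 1 = Real.exp (-ε) * q0 - q1 ∧ l 2 1 = 0) ∧
    -- (d)
    (Real.exp ε < q0 / q1 ∧ Real.exp ε < (1 - q1) / (1 - q0) ∧
        1 / (1 + Real.exp (-ε)) < q0 ∧ q1 < 1 / (1 + Real.exp ε) →
      l 1 1 = 1 / (Real.exp ε + 1) - q1 ∧
      l 2 1 = Real.exp ε * q0 - Real.exp (2 * ε) / (Real.exp ε + 1)) := by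
  obtain ⟨hf, hdom⟩ := hl
  obtain ⟨h01, h30, h10, h21, hL0, hU0, hL3, hU3, hsum, hnn⟩ := hf
  set E := Real.exp ε with hEdef
  set F := Real.exp (-ε) with hFdef
  have hE0 : (0 : ℝ) < E := Real.exp_pos ε
  have hF0 : (0 : ℝ) < F := Real.exp_pos _
  have hE1 : 1 < E := by rw [hEdef]; linarith [Real.add_one_le_exp ε]
  have hEF : E * F = 1 := exp_mul_exp_neg' ε
  have hF1 : F < 1 := F_lt_one' hF0 hEF hE1
  have kE : (1 : ℝ) < E * E := one_lt_sq' hE1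
  have hq0n : 0 < q0 := lt_of_lt_of_le hq1 hq01
  have hq11 : q1 < 1 := lt_of_le_of_lt hq01 hq0
  have h1q0 : 0 < 1 - q0 := by linarith
  have h1q1 : 0 < 1 - q1 := by linarith
  have hs0 := hsum 0
  have hs1 := hsum 1
  rw [Fin.sum_univ_four] at hs0 hs1
  have hcol0 : l 0 0 + E * l 1 1 + l 2 0 = q0 := by
    rw [h10, h30] at hs0; linarith
  have hcol1 : l 1 1 + E * l 2 0 + l 3 1 = 1 - q1 := by
    rw [h01, h21] at hs1; linarith
  have n11 := hnn 1 1
  have n20 := hnn 2 0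
  have hU0' : l 0 0 ≤ E * q1 := by rw [h01] at hU0; exact hU0
  have hU3' : l 3 1 ≤ E * (1 - q0) := by rw [h30] at hU3; exact hU3
  have kq0 : q0 * (F * E) = q0 := by linear_combination q0 * hEF
  have kq1 : q1 * (F * E) = q1 := by linear_combination q1 * hEF
  have k1q0 : (1 - q0) * (F * E) = 1 - q0 := by linear_combination (1 - q0) * hEF
  have k1q1 : (1 - q1) * (F * E) = 1 - q1 := by linear_combination (1 - q1) * hEF
  have keyb : E * (1 - F * (1 - q1)) = E - (1 - q1) := by
    linear_combination (q1 - 1) * hEF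
  have keyc : E * (1 - F * q0) = E - q0 := by linear_combination (-q0) * hEF
  have k11 : l 1 1 ≤ E * E * l 1 1 := by
    linarith [mul_nonneg n11 (show (0:ℝ) ≤ E * E - 1 by linarith)]
  have k20 : l 2 0 ≤ E * E * l 2 0 := by
    linarith [mul_nonneg n20 (show (0:ℝ) ≤ E * E - 1 by linarith)]
  refine ⟨?_, ?_, ?_, ?_⟩
  · -- case (a)
    rintro ⟨ha1, ha2⟩
    have hR1 : q0 ≤ E * q1 := by rw [div_le_iff₀ hq1] at ha1; linarith
    have hR2 : 1 - q1 ≤ E * (1 - q0) := by rw [div_le_iff₀ h1q0] at ha2; linarith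
    have hwf := feasible_mk ε q0 q1 q0 0 0 0 0 (1 - q1) hq1.le hq0.le
      (by ring) (by ring)
      (by linarith [mul_le_mul_of_nonneg_right hF1.le hq1.le]) hR1
      (by linarith [mul_le_mul_of_nonneg_right hF1.le h1q0.le]) hR2
      (by ring) (by ring) hq0n.le le_rfl le_rfl h1q1.le
    obtain ⟨w1, w2⟩ := hdom _ hwf
    simp at w1 w2
    have e00 : l 0 0 = q0 :=
      le_antisymm (by linarith [mul_nonneg hE0.le n11]) w1
    have e31 : l 3 1 = 1 - q1 :=
      le_antisymm (by linarith [mul_nonneg hE0.le n20]) (by linarith [w2])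
    have z1 : l 1 1 = 0 := zero_of' E _ hE1 n11
      (by linear_combination E * hcol0 - hcol1 - E * e00 + e31)
    have z2 : l 2 0 = 0 := zero_of' E _ hE1 n20
      (by linear_combination E * hcol1 - hcol0 + e00 - E * e31)
    exact ⟨z1, by rw [h21, z2]; ring⟩
  · -- case (b)
    intro h
    have hR2 : E * (1 - q0) ≤ 1 - q1 := by
      rcases h with ⟨_, h2⟩ | ⟨_, h2, _⟩ <;>
        (rw [lt_div_iff₀ h1q0] at h2; linarith)
    have hq1E : 1 ≤ (E + 1) * q1 := by
      rcases h with ⟨h1, _⟩ | ⟨_, _, h3⟩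
      · rw [div_le_iff₀ hq1] at h1
        exact div_fact1' hE1 (by linarith [mul_le_mul_of_nonneg_left h1 hE0.le])
      · rw [div_le_iff₀ (by positivity : (0:ℝ) < 1 + E)] at h3
        linarith
    have h1b : F * q1 ≤ 1 - F * (1 - q1) := by linarith
    have h2b : 1 - F * (1 - q1) ≤ E * q1 := b2' hE1 hEF hq1E
    have h3b : F * (1 - q0) ≤ E * (1 - q0) := by
      linarith [mul_le_mul_of_nonneg_right (show F ≤ E by linarith) h1q0.le]
    have nab : 0 ≤ 1 - F * (1 - q1) := by
      linarith [mul_le_mul_of_nonneg_right hF1.le h1q1.le]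
    have ncb : 0 ≤ F * (1 - q1) - (1 - q0) := by
      linarith [mul_le_mul_of_nonneg_left hR2 hF0.le, k1q0]
    have hwf := feasible_mk ε q0 q1 (1 - F * (1 - q1)) 0 0
      (F * (1 - q1) - (1 - q0)) (1 - q1 - E * (1 - q0)) (E * (1 - q0))
      hq1.le hq0.le (by ring) (by linear_combination (q1 - 1) * hEF)
      h1b h2b h3b le_rfl (by ring) (by ring)
      nab le_rfl ncb (by positivity)
    obtain ⟨w1, w2⟩ := hdom _ hwf
    simp at w1 w2
    have e31 : l 3 1 = E * (1 - q0) := le_antisymm hU3' (by linarith [w2])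
    have hcol0E : E * l 0 0 + E * E * l 1 1 + E * l 2 0 = E * q0 := by
      linear_combination E * hcol0
    have up : E * l 0 0 ≤ E - (1 - q1) := by linarith [hcol0E, hcol1, k11, e31]
    have w1' : 1 - F * (1 - q1) ≤ l 0 0 := by linarith [w1]
    have low : E - (1 - q1) ≤ E * l 0 0 := by
      linarith [mul_le_mul_of_nonneg_left w1' hE0.le, keyb]
    have hE00 : E * l 0 0 = E - (1 - q1) := le_antisymm up low
    have z1 : l 1 1 = 0 := zero_of' E _ hE1 n11
      (by linear_combination E * hcol0 - hcol1 - hE00 + e31)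
    refine ⟨z1, ?_⟩
    rw [h21]
    linarith [hcol1, z1, e31]
  · -- case (c)
    intro h
    have hR1s : E * q1 < q0 := by
      rcases h with ⟨h1, _⟩ | ⟨h1, _, _⟩ <;>
        (rw [lt_div_iff₀ hq1] at h1; linarith)
    have hq0E : q0 * (E + 1) ≤ E := by
      rcases h with ⟨_, h2⟩ | ⟨_, _, h3⟩
      · rw [div_le_iff₀ h1q0] at h2
        exact div_fact2' hE1 (by linarith [mul_le_mul_of_nonneg_left h2 hE0.le])
      · rw [le_div_iff₀ (by positivity : (0:ℝ) < 1 + F)] at h3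
        linarith [mul_le_mul_of_nonneg_right h3 hE0.le, kq0]
    have hb_c : q0 - E * q1 = E * (F * q0 - q1) := by
      linear_combination (-q0) * hEF
    have h1c : F * q1 ≤ E * q1 := by
      linarith [mul_le_mul_of_nonneg_right (show F ≤ E by linarith) hq1.le]
    have h3c : F * (1 - q0) ≤ 1 - F * q0 := by linarith
    have h4c : 1 - F * q0 ≤ E * (1 - q0) := c4' hE1 hEF hq0E
    have nbc : 0 ≤ F * q0 - q1 := by
      linarith [mul_le_mul_of_nonneg_left hR1s.le hF0.le, kq1]
    have ndc : 0 ≤ 1 - F * q0 := by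
      linarith [mul_le_mul_of_nonneg_left hq0.le hF0.le]
    have hwf := feasible_mk ε q0 q1 (E * q1) (q0 - E * q1) (F * q0 - q1)
      0 0 (1 - F * q0) hq1.le hq0.le hb_c (by ring)
      h1c le_rfl h3c h4c (by ring) (by ring)
      (by positivity) nbc le_rfl ndc
    obtain ⟨w1, w2⟩ := hdom _ hwf
    simp at w1 w2
    have e00 : l 0 0 = E * q1 := le_antisymm hU0' (by linarith [w1])
    have hcol1E : E * l 1 1 + E * E * l 2 0 + E * l 3 1 = E * (1 - q1) := by
      linear_combination E * hcol1
    have up : E * l 3 1 ≤ E - q0 := by linarith [hcol1E, hcol0, k20, e00]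
    have w2' : 1 - F * q0 ≤ l 3 1 := by linarith [w2]
    have low : E - q0 ≤ E * l 3 1 := by
      linarith [mul_le_mul_of_nonneg_left w2' hE0.le, keyc]
    have hE31 : E * l 3 1 = E - q0 := le_antisymm up low
    have z2 : l 2 0 = 0 := zero_of' E _ hE1 n20
      (by linear_combination E * hcol1 - hcol0 + e00 - hE31)
    have e31' : l 3 1 = 1 - F * q0 := by
      linear_combination F * hE31 + (1 - l 3 1) * hEF
    have hz : E * l 2 0 = 0 := by rw [z2]; ring
    refine ⟨by linarith [hcol1, hz, e31'], by rw [h21, z2]; ring⟩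
  · -- case (d)
    rintro ⟨h1, h2, h3, h4⟩
    rw [lt_div_iff₀ hq1] at h1
    rw [lt_div_iff₀ h1q0] at h2
    rw [div_lt_iff₀ (by positivity : (0:ℝ) < 1 + F)] at h3
    rw [lt_div_iff₀ (by positivity : (0:ℝ) < 1 + E)] at h4
    have hE1p : (0 : ℝ) < E + 1 := by linarith
    have hne1 : E + 1 ≠ 0 := ne_of_gt hE1p
    have hd3 : E ≤ q0 * (E + 1) := by
      linarith [mul_lt_mul_of_pos_left h3 hE0, kq0]
    have hd4 : q1 * (E + 1) ≤ 1 := by linarith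
    have nbd : 0 ≤ 1 / (E + 1) - q1 := by
      have : q1 ≤ 1 / (E + 1) := by rw [le_div_iff₀ hE1p]; linarith
      linarith
    have ncd : 0 ≤ q0 - E / (E + 1) := by
      have : E / (E + 1) ≤ q0 := by rw [div_le_iff₀ hE1p]; linarith
      linarith
    have h1d : F * q1 ≤ E * q1 := by
      linarith [mul_le_mul_of_nonneg_right (show F ≤ E by linarith) hq1.le]
    have h3d : F * (1 - q0) ≤ E * (1 - q0) := by
      linarith [mul_le_mul_of_nonneg_right (show F ≤ E by linarith) h1q0.le]
    have hwf := feasible_mk ε q0 q1 (E * q1) (E / (E + 1) - E * q1)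
      (1 / (E + 1) - q1) (q0 - E / (E + 1)) (E * q0 - E * E / (E + 1))
      (E * (1 - q0)) hq1.le hq0.le (by ring) (by ring)
      h1d le_rfl h3d le_rfl (by ring) (by field_simp; ring)
      (by positivity) nbd ncd (by positivity)
    obtain ⟨w1, w2⟩ := hdom _ hwf
    simp at w1 w2
    have e00 : l 0 0 = E * q1 := le_antisymm hU0' (by linarith [w1])
    have e31 : l 3 1 = E * (1 - q0) := le_antisymm hU3' (by linarith [w2])
    have hne : E * E - 1 ≠ 0 := ne_of_gt (by linarith)
    have p1 : (E * E - 1) * l 1 1 = (E - 1) - q1 * (E * E - 1) := by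
      linear_combination E * hcol0 - hcol1 - E * e00 + e31
    have p2 : (E * E - 1) * l 2 0 = (E * E - 1) * q0 - E * (E - 1) := by
      linear_combination E * hcol1 - hcol0 + e00 - E * e31
    have q1' : (E * E - 1) * (1 / (E + 1) - q1) = (E - 1) - q1 * (E * E - 1) := by
      field_simp; ring
    have q2' : (E * E - 1) * (q0 - E / (E + 1)) = (E * E - 1) * q0 - E * (E - 1) := by
      field_simp; ring
    have z1 : l 1 1 = 1 / (E + 1) - q1 :=
      mul_left_cancel₀ hne (p1.trans q1'.symm)
    have z20 : l 2 0 = q0 - E / (E + 1) :=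
      mul_left_cancel₀ hne (p2.trans q2'.symm)
    have h2e : Real.exp (2 * ε) = E * E := by
      rw [hEdef, two_mul, Real.exp_add]
    refine ⟨z1, ?_⟩
    rw [h21, h2e, z20]
    field_simp

end IPPaper
end
end

section
/- For every ε>0 and every Δ>0 there exist a binary-secret prior P(S,Y) and an L-Lipschitz convex utility u:[0,1]→ℝ with L ≤ 3Δ·(1+2/(e^ε−1)) such that U_ε − U₀ ≥ Δ, where for δ≥0, U_δ denotes the supremum of Σ_{t:P(T=t)>0} P(T=t)·u(P(Y=1|T=t)) over all δ-IP information structures P(S,Y,T) (over all finite signal sets 𝒯) whose marginal on (S,Y) equals the given prior. -/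
open Real
open scoped Classical

noncomputable section

/-!
Let `S` be uniform on `Fin 2` and `Y = 1` exactly when `S = 0`, so that `Y` reveals the secret.
Perfect privacy makes the signal independent of `S`, hence of `(S, Y)` because `Y` is a function
of `S`; every posterior then equals the prior `1/2`, where the utility `c |x - 1/2|` vanishes.
Randomized response, reporting `S` truthfully with probability `a = e^ε / (1 + e^ε)`, is ε-IP
(its likelihood ratio is exactly `e^ε`) and moves the posterior to `a` or `1 - a`, earning
`c (a - 1/2) = c (e^ε - 1) / (2 (e^ε + 1))`; this equals `Δ` for `c = 2Δ (1 + 2 / (e^ε - 1))`.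
-/

namespace IPPaper

section InfoStructure

variable {S T : Type} {P : S → Bool → T → ℝ}

lemma pT_nonneg [Fintype S] (hP : ∀ s y t, 0 ≤ P s y t) (t : T) : 0 ≤ pT P t :=
  Finset.sum_nonneg fun s _ => Finset.sum_nonneg fun y _ => hP s y t

lemma pYT_nonneg [Fintype S] (hP : ∀ s y t, 0 ≤ P s y t) (y : Bool) (t : T) :
    0 ≤ pYT P y t :=
  Finset.sum_nonneg fun s _ => hP s y t

lemma pT_eq_pYT_add_pYT [Fintype S] (t : T) : pT P t = pYT P true t + pYT P false t := by
  simp only [pT, pYT, Fintype.sum_bool, Finset.sum_add_distrib]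

lemma pS_eq_pSY_add_pSY [Fintype T] (y : Bool) (s : S) :
    pS P s = pSY P s y + pSY P s (!y) := by
  cases y <;> simp only [pS, pSY, Fintype.sum_bool, Bool.not_true, Bool.not_false, add_comm]

lemma pST_eq_add (y : Bool) (s : S) (t : T) : pST P s t = P s y t + P s (!y) t := by
  cases y <;> simp only [pST, Fintype.sum_bool, Bool.not_true, Bool.not_false, add_comm]

lemma sum_pT [Fintype S] [Fintype T] (hP : InfoStructure P) : ∑ t, pT P t = 1 := by
  rw [← hP.2.1]
  simp only [pT]
  rw [Finset.sum_comm]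
  exact Finset.sum_congr rfl fun s _ => Finset.sum_comm

lemma postYT_mem_Icc [Fintype S] (hP : ∀ s y t, 0 ≤ P s y t) {t : T} (ht : 0 < pT P t) :
    postYT P t ∈ Set.Icc 0 1 := by
  refine ⟨div_nonneg (pYT_nonneg hP true t) ht.le, (div_le_one ht).2 ?_⟩
  linarith [pT_eq_pYT_add_pYT (P := P) t, pYT_nonneg hP false t]

lemma EU_le [Fintype S] [Fintype T] (hP : InfoStructure P) {u : ℝ → ℝ} {M : ℝ}
    (hu : ∀ x ∈ Set.Icc 0 1, u x ≤ M) : EU P u ≤ M :=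
  calc EU P u ≤ ∑ t ∈ Finset.univ.filter (fun t => 0 < pT P t), pT P t * M :=
        Finset.sum_le_sum fun t ht =>
          have ht : 0 < pT P t := (Finset.mem_filter.mp ht).2
          mul_le_mul_of_nonneg_left (hu _ (postYT_mem_Icc hP.1 ht)) ht.le
    _ = ∑ t, pT P t * M :=
        Finset.sum_filter_of_ne fun t _ h =>
          (pT_nonneg hP.1 t).lt_of_ne' (left_ne_zero_of_mul h)
    _ = M := by rw [← Finset.sum_mul, sum_pT hP, one_mul]

lemma eq_zero_of_pSY_eq_zero [Fintype T] (hP : ∀ s y t, 0 ≤ P s y t) {s : S} {y : Bool}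
    (h : pSY P s y = 0) (t : T) : P s y t = 0 :=
  (Finset.sum_eq_zero_iff_of_nonneg fun t _ => hP s y t).mp h t (Finset.mem_univ t)

lemma pST_eq_pS_mul_pT_of_isIP_zero [Fintype S] [Fintype T] (hP : InfoStructure P)
    (h0 : IsIP 0 P) (s : S) (t : T) : pST P s t = pS P s * pT P t := by
  have hcond : ∀ s', condTS P t s' = condTS P t s := fun s' =>
    le_antisymm (by simpa using h0 s' s t) (by simpa using h0 s s' t)
  have hpST : ∀ s', pST P s' t = condTS P t s * pS P s' := fun s' => by
    rw [← hcond s', condTS, div_mul_cancel₀ _ (hP.2.2 s').ne']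
  have hpT : pT P t = condTS P t s := by
    change ∑ s', pST P s' t = _
    simp only [hpST, ← Finset.mul_sum]
    rw [show ∑ s', pS P s' = 1 from hP.2.1, mul_one]
  rw [hpST, hpT, mul_comm]

lemma eq_pSY_mul_pT_of_isIP_zero [Fintype S] [Fintype T] (hP : InfoStructure P)
    (h0 : IsIP 0 P) (hY : ∀ s, pSY P s true = 0 ∨ pSY P s false = 0)
    (s : S) (y : Bool) (t : T) : P s y t = pSY P s y * pT P t := by
  by_cases hy : pSY P s y = 0
  · rw [hy, eq_zero_of_pSY_eq_zero hP.1 hy, zero_mul]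
  have hy' : pSY P s (!y) = 0 := by
    cases y
    exacts [(hY s).resolve_right hy, (hY s).resolve_left hy]
  have hst : pST P s t = P s y t := by
    rw [pST_eq_add y, eq_zero_of_pSY_eq_zero hP.1 hy', add_zero]
  rw [← hst, pST_eq_pS_mul_pT_of_isIP_zero hP h0, pS_eq_pSY_add_pSY y, hy', add_zero]

lemma postYT_eq_of_isIP_zero [Fintype S] [Fintype T] (hP : InfoStructure P) (h0 : IsIP 0 P)
    (hY : ∀ s, pSY P s true = 0 ∨ pSY P s false = 0) {t : T} (ht : 0 < pT P t) :
    postYT P t = ∑ s, pSY P s true := by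
  simp only [postYT, pYT, eq_pSY_mul_pT_of_isIP_zero hP h0 hY, ← Finset.sum_mul,
    mul_div_cancel_right₀ _ ht.ne']

end InfoStructure

section RandomizedResponse

def correlatedPrior (s : Fin 2) (y : Bool) : ℝ := if y = decide (s = 0) then 1 / 2 else 0

def randomizedResponse (a : ℝ) (s : Fin 2) (y : Bool) (t : Fin 2) : ℝ :=
  correlatedPrior s y * if t = s then a else 1 - a

variable {a : ℝ}

lemma pSY_randomizedResponse (s : Fin 2) (y : Bool) :
    pSY (randomizedResponse a) s y = correlatedPrior s y := by
  simp only [pSY, randomizedResponse, ← Finset.mul_sum, Fin.sum_univ_two]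
  fin_cases s <;> simp

lemma pST_randomizedResponse (s t : Fin 2) :
    pST (randomizedResponse a) s t = (if t = s then a else 1 - a) / 2 := by
  fin_cases s <;> simp [pST, randomizedResponse, correlatedPrior, div_eq_inv_mul]

lemma pS_randomizedResponse (s : Fin 2) : pS (randomizedResponse a) s = 1 / 2 := by
  rw [pS_eq_pSY_add_pSY true, pSY_randomizedResponse, pSY_randomizedResponse]
  fin_cases s <;> norm_num [correlatedPrior]

lemma pT_randomizedResponse (t : Fin 2) : pT (randomizedResponse a) t = 1 / 2 := by
  change ∑ s, pST _ s t = _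
  rw [Fin.sum_univ_two, pST_randomizedResponse, pST_randomizedResponse]
  fin_cases t <;> norm_num <;> ring

lemma condTS_randomizedResponse (t s : Fin 2) :
    condTS (randomizedResponse a) t s = if t = s then a else 1 - a := by
  rw [condTS, pST_randomizedResponse, pS_randomizedResponse]
  ring

lemma postYT_randomizedResponse (t : Fin 2) :
    postYT (randomizedResponse a) t = if t = 0 then a else 1 - a := by
  rw [postYT, pT_randomizedResponse]
  fin_cases t <;> norm_num [pYT, randomizedResponse, correlatedPrior, Fin.sum_univ_two]

lemma infoStructure_randomizedResponse (ha : a ∈ Set.Icc 0 1) :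
    InfoStructure (randomizedResponse a) := by
  refine ⟨fun s y t => mul_nonneg ?_ ?_, ?_, fun s => by rw [pS_randomizedResponse]; norm_num⟩
  · unfold correlatedPrior; split_ifs <;> norm_num
  · split_ifs <;> linarith [ha.1, ha.2]
  · change ∑ s, pS _ s = 1
    simp only [pS_randomizedResponse, Fin.sum_univ_two]
    norm_num

lemma isIP_randomizedResponse {ε : ℝ} (h₁ : a ≤ exp ε * (1 - a))
    (h₂ : 1 - a ≤ exp ε * a) : IsIP ε (randomizedResponse a) := by
  intro s₁ s₂ t
  simp only [condTS_randomizedResponse]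
  split_ifs <;> nlinarith

lemma EU_randomizedResponse (c : ℝ) :
    EU (randomizedResponse a) (fun x => c * |x - 1 / 2|) = c * |a - 1 / 2| := by
  have hfilter : Finset.univ.filter (fun t => 0 < pT (randomizedResponse a) t) = Finset.univ :=
    Finset.filter_true_of_mem fun t _ => by rw [pT_randomizedResponse]; norm_num
  rw [EU, hfilter, Fin.sum_univ_two]
  simp only [pT_randomizedResponse, postYT_randomizedResponse, Fin.isValue, if_pos,
    one_ne_zero, if_false]
  rw [show (1 : ℝ) - a - 1 / 2 = -(a - 1 / 2) by ring, abs_neg]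
  ring

end RandomizedResponse

section ExpParameter

variable {ε : ℝ}

lemma exp_div_one_add_exp_mem_Icc (ε : ℝ) : exp ε / (1 + exp ε) ∈ Set.Icc 0 1 :=
  ⟨by positivity, (div_le_one (by positivity)).mpr (by linarith)⟩

lemma isIP_randomizedResponse_exp (hε : 0 ≤ ε) :
    IsIP ε (randomizedResponse (exp ε / (1 + exp ε))) := by
  have hE : 1 ≤ exp ε := one_le_exp hε
  have hE₁ : 0 < 1 + exp ε := by positivity
  apply isIP_randomizedResponse
  · exact le_of_eq (by field_simp; ring)
  · rw [← sub_nonneg]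
    field_simp
    nlinarith

lemma mul_abs_exp_div_one_add_exp_sub_half (hε : 0 < ε) (Δ : ℝ) :
    2 * Δ * (1 + 2 / (exp ε - 1)) * |exp ε / (1 + exp ε) - 1 / 2| = Δ := by
  have hE : 0 < exp ε - 1 := sub_pos.mpr (one_lt_exp_iff.mpr hε)
  have hE₁ : 0 < 1 + exp ε := by positivity
  rw [abs_of_nonneg (by rw [sub_nonneg, le_div_iff₀ hE₁]; linarith)]
  field_simp
  ring

end ExpParameter

lemma convexOn_mul_abs_sub {c : ℝ} (hc : 0 ≤ c) (m : ℝ) {s : Set ℝ} (hs : Convex ℝ s) :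
    ConvexOn ℝ s (fun x => c * |x - m|) :=
  (convexOn_dist m hs).smul hc

lemma lipschitzWith_mul_abs_sub {c : ℝ} (hc : 0 ≤ c) (m : ℝ) :
    LipschitzWith (Real.toNNReal c) (fun x => c * |x - m|) :=
  LipschitzWith.of_dist_le_mul fun x y => by
    rw [Real.coe_toNNReal _ hc, Real.dist_eq, Real.dist_eq, ← mul_sub, abs_mul, abs_of_nonneg hc]
    exact mul_le_mul_of_nonneg_left
      ((abs_abs_sub_abs_le_abs_sub _ _).trans_eq (by ring_nf)) hc

lemma EU_eq_zero_of_isIP_zero {T : Type} [Fintype T] {P : Fin 2 → Bool → T → ℝ}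
    (hP : InfoStructure P) (h0 : IsIP 0 P) (hm : ∀ s y, pSY P s y = correlatedPrior s y)
    {u : ℝ → ℝ} (hu : u (1 / 2) = 0) : EU P u = 0 := by
  have hY : ∀ s, pSY P s true = 0 ∨ pSY P s false = 0 := fun s => by
    fin_cases s <;> simp [hm, correlatedPrior]
  have hprior : ∑ s, pSY P s true = 1 / 2 := by
    simp [hm, correlatedPrior]
  refine Finset.sum_eq_zero fun t ht => ?_
  rw [postYT_eq_of_isIP_zero hP h0 hY (Finset.mem_filter.mp ht).2, hprior, hu, mul_zero]

/-- arbitrarily large utility gap between ε-IP and perfect (0-IP)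
privacy, witnessed by an L-Lipschitz convex utility with
`L ≤ 3Δ(1 + 2/(e^ε − 1))`. -/
theorem statement8 (ε Δ : ℝ) (hε : 0 < ε) (hΔ : 0 < Δ) :
    ∃ (Pr : Fin 2 → Bool → ℝ) (u : ℝ → ℝ) (L : ℝ),
      -- a binary-secret prior
      (∀ s y, 0 ≤ Pr s y) ∧ (∑ s, ∑ y, Pr s y = 1) ∧
      (∀ s : Fin 2, 0 < Pr s true + Pr s false) ∧
      Pr 1 true / (Pr 1 true + Pr 1 false) ≤ Pr 0 true / (Pr 0 true + Pr 0 false) ∧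
      -- an L-Lipschitz convex utility with the stated bound on L
      L ≤ 3 * Δ * (1 + 2 / (Real.exp ε - 1)) ∧
      ConvexOn ℝ (Set.Icc 0 1) u ∧
      LipschitzOnWith (Real.toNNReal L) u (Set.Icc (0 : ℝ) 1) ∧
      -- U_ε − U₀ ≥ Δ
      sSup {x | ∃ (n : ℕ) (P : Fin 2 → Bool → Fin n → ℝ),
          InfoStructure P ∧ IsIP ε P ∧ (∀ s y, pSY P s y = Pr s y) ∧ EU P u = x} -
        sSup {x | ∃ (n : ℕ) (P : Fin 2 → Bool → Fin n → ℝ),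
          InfoStructure P ∧ IsIP 0 P ∧ (∀ s y, pSY P s y = Pr s y) ∧ EU P u = x}
        ≥ Δ := by
  set c := 2 * Δ * (1 + 2 / (exp ε - 1))
  have hc : 0 ≤ c := by have := one_lt_exp_iff.mpr hε; positivity
  refine ⟨correlatedPrior, fun x => c * |x - 1 / 2|, c, ?_, ?_, ?_, ?_, by linarith,
    convexOn_mul_abs_sub hc _ (convex_Icc 0 1), (lipschitzWith_mul_abs_sub hc _).lipschitzOnWith,
    ?_⟩
  · intro s y; unfold correlatedPrior; split_ifs <;> norm_num
  · norm_num [correlatedPrior, Fin.sum_univ_two]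
  · intro s; fin_cases s <;> simp [correlatedPrior]
  · simp [correlatedPrior]
  rw [ge_iff_le, ← sub_zero Δ]
  refine sub_le_sub (le_csSup ⟨c / 2, ?_⟩ ⟨2, randomizedResponse (exp ε / (1 + exp ε)),
    infoStructure_randomizedResponse (exp_div_one_add_exp_mem_Icc ε),
    isIP_randomizedResponse_exp hε.le, pSY_randomizedResponse,
    by rw [EU_randomizedResponse, mul_abs_exp_div_one_add_exp_sub_half hε]⟩)
    (Real.sSup_nonpos ?_)
  · rintro _ ⟨n, P, hP, -, -, rfl⟩
    refine EU_le hP fun x hx => ?_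
    have : |x - 1 / 2| ≤ 1 / 2 := abs_le.mpr ⟨by linarith [hx.1], by linarith [hx.2]⟩
    nlinarith
  · rintro _ ⟨n, P, hP, h0, hm, rfl⟩
    rw [EU_eq_zero_of_isIP_zero hP h0 hm (by norm_num)]

end IPPaper
end
end

section
/- Let ε>0 and π₀,π₁>0, and set q₂ = e^ε·π₀/(e^ε·π₀+π₁) and q₃ = π₀/(π₀+e^ε·π₁). Then for every convex function u:[0,1]→ℝ: π₁·u(0) + ((π₁+e^ε·π₀)/(e^{2ε}−1))·u(q₂) ≥ ((e^{2ε}·π₁+e^ε·π₀)/(e^{2ε}−1))·u(q₃). -/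
/-! The point `q₃` is the convex combination of `0` and `q₂` with weights proportional to
`π₁` and `β = (π₁ + e^ε π₀)/(e^{2ε} - 1)`, and the coefficient of `u(q₃)` is exactly `π₁ + β`.
The inequality is therefore Jensen's inequality for these two points, multiplied by `π₁ + β`. -/

open Real

theorem ConvexOn.add_mul_map_div_smul_le {E : Type*} [AddCommGroup E] [Module ℝ E]
    {s : Set E} {u : E → ℝ} (hu : ConvexOn ℝ s u) (h0 : 0 ∈ s) {x : E} (hx : x ∈ s)
    {α β : ℝ} (hα : 0 ≤ α) (hβ : 0 ≤ β) :
    (α + β) * u ((β / (α + β)) • x) ≤ α * u 0 + β * u x := by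
  rcases (add_nonneg hα hβ).eq_or_lt with hsum | hsum
  · obtain ⟨rfl, rfl⟩ : α = 0 ∧ β = 0 := ⟨by linarith, by linarith⟩
    simp
  have hweights : α / (α + β) + β / (α + β) = 1 := by
    rw [← add_div, div_self hsum.ne']
  have jensen := hu.2 h0 hx (by positivity) (by positivity) hweights
  rw [smul_zero, zero_add, smul_eq_mul, smul_eq_mul] at jensen
  calc (α + β) * u ((β / (α + β)) • x)
      ≤ (α + β) * (α / (α + β) * u 0 + β / (α + β) * u x) := by gcongr
    _ = α * u 0 + β * u x := by field_simp

/-- a convexity inequality used in the analysis of the dominant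
point (Eq. (12) in the paper's appendix). -/
theorem statement12 (ε π0 π1 : ℝ) (hε : 0 < ε) (h0 : 0 < π0) (h1 : 0 < π1)
    (u : ℝ → ℝ) (hu : ConvexOn ℝ (Set.Icc 0 1) u) :
    (Real.exp (2 * ε) * π1 + Real.exp ε * π0) / (Real.exp (2 * ε) - 1) *
        u (π0 / (π0 + Real.exp ε * π1)) ≤
      π1 * u 0 +
        (π1 + Real.exp ε * π0) / (Real.exp (2 * ε) - 1) *
          u (Real.exp ε * π0 / (Real.exp ε * π0 + π1)) := by
  have hexp2 : exp (2 * ε) = exp ε ^ 2 := by rw [← exp_nat_mul]; norm_num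
  have hexp : 1 < exp ε := one_lt_exp_iff.mpr hε
  have hden : 0 < exp ε ^ 2 - 1 := by nlinarith
  rw [hexp2]
  set β := (π1 + exp ε * π0) / (exp ε ^ 2 - 1) with hβ
  have hcoef : (exp ε ^ 2 * π1 + exp ε * π0) / (exp ε ^ 2 - 1) = π1 + β := by
    rw [hβ]; field_simp; ring
  have hq₃ : π0 / (π0 + exp ε * π1) =
      (β / (π1 + β)) • (exp ε * π0 / (exp ε * π0 + π1)) := by
    rw [← hcoef, hβ, smul_eq_mul]; field_simp; ring
  have hq₂ : exp ε * π0 / (exp ε * π0 + π1) ∈ Set.Icc (0 : ℝ) 1 :=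
    ⟨by positivity, (div_le_one (by positivity)).mpr (by linarith)⟩
  rw [hcoef, hq₃]
  exact hu.add_mul_map_div_smul_le ⟨le_rfl, zero_le_one⟩ hq₂ h1.le (by positivity)
end

section
/- Fix ε>0 and L>0. Consider the binary-secret prior with π₀ = π₁ = 1/2, q_{s₀} = e^ε/(1+e^ε), q_{s₁} = 1/(1+e^ε), and the convex utility u(q) = L·|q − 1/2|. Then: (i) the information structure that releases T = Y (i.e. 𝒯 = {0,1} with T = Y almost surely) is ε-IP for this prior and has expected utility Σ_{t:P(T=t)>0} P(T=t)·u(P(Y=1|T=t)) = L/2; (ii) every 0-IP information structure with this marginal P(S,Y) has expected utility at most L/(1+e^ε); consequently U_ε − U₀ ≥ L·(e^ε−1)/(2·(1+e^ε)), where for δ≥0, U_δ is the supremum of the expected utility over all δ-IP information structures with this marginal. -/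
open Real
open scoped Classical

noncomputable section

namespace IPPaper

/-- Generic bound: any information structure has expected utility at most `L/2`
for the utility `u q = L * |q - 1/2|`. -/
lemma EU_le_half {S T : Type} [Fintype S] [Fintype T] (L : ℝ) (hL : 0 ≤ L)
    (u : ℝ → ℝ) (hu : ∀ q, u q = L * |q - 1 / 2|)
    (P : S → Bool → T → ℝ) (hIS : InfoStructure P) :
    EU P u ≤ L / 2 := by
  obtain ⟨hnn, hsum, -⟩ := hIS
  have hYTnn : ∀ y t, 0 ≤ pYT P y t := fun y t =>
    Finset.sum_nonneg fun s _ => hnn s y t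
  have hpTnn : ∀ t, 0 ≤ pT P t := fun t =>
    Finset.sum_nonneg fun s _ => Finset.sum_nonneg fun y _ => hnn s y t
  have hpT : ∀ t, pT P t = pYT P true t + pYT P false t := by
    intro t
    rw [pT, Finset.sum_comm]
    simp [pYT, Fintype.sum_bool]
  have htot : ∑ t, pT P t = 1 := by
    rw [← hsum]
    simp only [pT]
    rw [Finset.sum_comm]
    exact Finset.sum_congr rfl fun s _ => Finset.sum_comm
  have hterm : ∀ t ∈ Finset.univ.filter (fun t => 0 < pT P t),
      pT P t * u (postYT P t) ≤ L / 2 * pT P t := by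
    intro t ht
    have hpos : 0 < pT P t := (Finset.mem_filter.mp ht).2
    have hne : pT P t ≠ 0 := hpos.ne'
    rw [hu, postYT]
    have h2 : pYT P true t / pT P t - 1 / 2 =
        (pYT P true t - pT P t / 2) / pT P t := by
      rw [sub_div, div_right_comm, div_self hne]
    rw [h2, abs_div, abs_of_pos hpos]
    have h1 : pT P t * (L * (|pYT P true t - pT P t / 2| / pT P t)) =
        L * |pYT P true t - pT P t / 2| := by
      rw [mul_comm (pT P t), mul_assoc, div_mul_cancel₀ _ hne]
    rw [h1]
    have habs : |pYT P true t - pT P t / 2| ≤ pT P t / 2 := by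
      rw [abs_le]
      constructor
      · have := hYTnn true t; linarith
      · have := hYTnn false t
        have := hpT t
        linarith
    calc L * |pYT P true t - pT P t / 2| ≤ L * (pT P t / 2) :=
          mul_le_mul_of_nonneg_left habs hL
      _ = L / 2 * pT P t := by ring
  calc EU P u ≤ ∑ t ∈ Finset.univ.filter (fun t => 0 < pT P t), L / 2 * pT P t :=
        Finset.sum_le_sum hterm
    _ ≤ ∑ t, L / 2 * pT P t := by
        apply Finset.sum_le_sum_of_subset_of_nonneg (Finset.filter_subset _ _)
        intro t _ _
        exact mul_nonneg (by linarith) (hpTnn t)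
    _ = L / 2 := by rw [← Finset.mul_sum, htot, mul_one]


/-- The release-`Y` structure: all claimed properties, generically in the signal type. -/
lemma releaseY_props {T : Type} [Fintype T] (ε L : ℝ) (hε : 0 < ε) (hL : 0 < L)
    (q0 q1 : ℝ)
    (hq0 : q0 = Real.exp ε / (1 + Real.exp ε))
    (hq1 : q1 = 1 / (1 + Real.exp ε))
    (Pr : Fin 2 → Bool → ℝ)
    (hPr : ∀ (s : Fin 2) (y : Bool), Pr s y =
      (1 / 2) * (if s = 0 then (if y then q0 else 1 - q0)
                 else (if y then q1 else 1 - q1)))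
    (u : ℝ → ℝ) (hu : ∀ q, u q = L * |q - 1 / 2|)
    (eqv : Bool ≃ T)
    (P : Fin 2 → Bool → T → ℝ)
    (hP : ∀ s y t, P s y t = if t = eqv y then Pr s y else 0) :
    InfoStructure P ∧ IsIP ε P ∧ (∀ s y, pSY P s y = Pr s y) ∧ EU P u = L / 2 := by
  have hE1 : 1 < Real.exp ε := by
    calc (1:ℝ) = Real.exp 0 := (Real.exp_zero).symm
      _ < Real.exp ε := Real.exp_lt_exp.mpr hε
  have hEpos : (0:ℝ) < 1 + Real.exp ε := by linarith
  have hq1pos : 0 < q1 := by rw [hq1]; positivity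
  have hq0lt : q0 < 1 := by
    rw [hq0, div_lt_one hEpos]; linarith
  have hq01 : q0 + q1 = 1 := by
    rw [hq0, hq1]; field_simp; ring
  have hq0q1 : q0 = Real.exp ε * q1 := by
    rw [hq0, hq1]; field_simp
  have hle : q1 ≤ q0 := by
    rw [hq0q1]; nlinarith
  have hq0pos : 0 < q0 := lt_of_lt_of_le hq1pos hle
  have hq1lt : q1 < 1 := lt_of_le_of_lt hle hq0lt
  -- value facts about Pr
  have hPrval : ∀ s y, Pr s y = (1/2) * (if (s = 0) = (y = true) then q0 else q1) := by
    intro s y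
    rw [hPr]
    fin_cases s <;> cases y <;> simp <;> linarith
  have hPrnn : ∀ s y, 0 ≤ Pr s y := by
    intro s y; rw [hPrval]
    split <;> linarith
  have hPrsum : ∀ s, Pr s true + Pr s false = 1 / 2 := by
    intro s
    rw [hPrval, hPrval]
    fin_cases s <;> simp <;> linarith
  have hPrub : ∀ s y, Pr s y ≤ q0 / 2 := by
    intro s y; rw [hPrval]; split <;> linarith
  have hPrlb : ∀ s y, q1 / 2 ≤ Pr s y := by
    intro s y; rw [hPrval]; split <;> linarith
  have hkey : ∀ (s₁ s₂ : Fin 2) y, Pr s₁ y ≤ Real.exp ε * Pr s₂ y := by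
    intro s₁ s₂ y
    calc Pr s₁ y ≤ q0 / 2 := hPrub s₁ y
      _ = Real.exp ε * (q1 / 2) := by rw [hq0q1]; ring
      _ ≤ Real.exp ε * Pr s₂ y :=
          mul_le_mul_of_nonneg_left (hPrlb s₂ y) (by positivity)
  -- marginals
  have hSY : ∀ s y, pSY P s y = Pr s y := by
    intro s y
    simp [pSY, hP, Finset.sum_ite_eq']
  have hST : ∀ s t, pST P s t = Pr s (eqv.symm t) := by
    intro s t
    have hiff : ∀ y : Bool, (t = eqv y) ↔ (y = eqv.symm t) := by
      intro y
      constructor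
      · intro h; simp [h]
      · intro h; simp [h]
    simp only [pST, hP]
    rw [Finset.sum_congr rfl fun y _ => if_congr (hiff y) rfl rfl]
    simp [Finset.sum_ite_eq']
  have hS : ∀ s, pS P s = 1 / 2 := by
    intro s
    have : pS P s = ∑ y, pSY P s y := by
      simp [pS, pSY]
    rw [this]
    simp [Fintype.sum_bool, hSY, hPrsum]
  have hT : ∀ t, pT P t = 1 / 2 := by
    intro t
    have h1 : pT P t = ∑ s, pST P s t := by
      simp [pT, pST]
    rw [h1]
    simp only [hST]
    rw [Fin.sum_univ_two]
    have := hPrsum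
    cases h : eqv.symm t <;>
      · rw [hPrval, hPrval]; simp <;> linarith
  have hPrT : Pr 0 true + Pr 1 true = 1 / 2 := by
    rw [hPrval, hPrval]; simp; linarith
  have hsumT : ∀ s y, ∑ t, P s y t = Pr s y := by
    intro s y; simp [hP, Finset.sum_ite_eq']
  have hYTtrue : ∀ t, pYT P true t = if t = eqv true then 1 / 2 else 0 := by
    intro t
    simp only [pYT, hP]
    rw [Fin.sum_univ_two]
    by_cases h : t = eqv true
    · simp only [h, if_pos rfl, if_true]
      exact hPrT
    · simp [h]
  have hpost : ∀ t, postYT P t = if t = eqv true then 1 else 0 := by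
    intro t
    rw [postYT, hYTtrue, hT]
    by_cases h : t = eqv true <;> simp [h]
  refine ⟨⟨?_, ?_, ?_⟩, ?_, hSY, ?_⟩
  · intro s y t
    rw [hP]
    split
    · exact hPrnn s y
    · exact le_rfl
  · have : ∀ s : Fin 2, ∑ y, ∑ t, P s y t = 1 / 2 := by
      intro s
      rw [Fintype.sum_bool, hsumT, hsumT, hPrsum]
    rw [Fin.sum_univ_two, this, this]
    norm_num
  · intro s; rw [hS]; norm_num
  · intro s₁ s₂ t
    rw [condTS, condTS, hST, hST, hS, hS]
    have hdiv : ∀ x : ℝ, x / (1 / 2) = 2 * x := fun x => by ring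
    rw [hdiv, hdiv]
    have h := hkey s₁ s₂ (eqv.symm t)
    linarith
  · rw [EU]
    have hfilter : Finset.univ.filter (fun t => 0 < pT P t) = Finset.univ := by
      apply Finset.filter_true_of_mem
      intro t _
      rw [hT]; norm_num
    rw [hfilter, ← Equiv.sum_comp eqv (fun t => pT P t * u (postYT P t)),
      Fintype.sum_bool]
    rw [hT, hT, hpost, hpost, hu, hu]
    have hne : eqv false ≠ eqv true := by simp
    rw [if_pos rfl, if_neg hne]
    rw [show |1 - 1/2| = |(1:ℝ)/2| from by norm_num,
      show |0 - 1/2| = |(1:ℝ)/2| from by norm_num, abs_of_pos (by norm_num : (0:ℝ) < 1/2)]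
    ring


/-- Part (ii): every 0-IP structure with the given marginal has EU ≤ L/(1+e^ε). -/
lemma zeroIP_bound (ε L : ℝ) (hε : 0 < ε) (hL : 0 < L)
    (q0 q1 : ℝ)
    (hq0 : q0 = Real.exp ε / (1 + Real.exp ε))
    (hq1 : q1 = 1 / (1 + Real.exp ε))
    (Pr : Fin 2 → Bool → ℝ)
    (hPr : ∀ (s : Fin 2) (y : Bool), Pr s y =
      (1 / 2) * (if s = 0 then (if y then q0 else 1 - q0)
                 else (if y then q1 else 1 - q1)))
    (u : ℝ → ℝ) (hu : ∀ q, u q = L * |q - 1 / 2|)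
    (n : ℕ) (P' : Fin 2 → Bool → Fin n → ℝ)
    (hIS : InfoStructure P') (hIP : IsIP 0 P')
    (hM : ∀ s y, pSY P' s y = Pr s y) :
    EU P' u ≤ L / (1 + Real.exp ε) := by
  have hE1 : 1 < Real.exp ε := by
    calc (1:ℝ) = Real.exp 0 := (Real.exp_zero).symm
      _ < Real.exp ε := Real.exp_lt_exp.mpr hε
  have hEpos : (0:ℝ) < 1 + Real.exp ε := by linarith
  have hq01 : q0 + q1 = 1 := by
    rw [hq0, hq1]; field_simp; ring
  obtain ⟨hnn, hsum, -⟩ := hIS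
  have hPrsum : ∀ s : Fin 2, Pr s true + Pr s false = 1 / 2 := by
    intro s
    rw [hPr, hPr]
    fin_cases s <;> simp <;> linarith
  have hS : ∀ s, pS P' s = 1 / 2 := by
    intro s
    have h1 : pS P' s = ∑ y, pSY P' s y := by simp [pS, pSY]
    rw [h1, Fintype.sum_bool, hM, hM, hPrsum]
  have hSTnn : ∀ s t, 0 ≤ pST P' s t :=
    fun s t => Finset.sum_nonneg fun y _ => hnn s y t
  have hdiv : ∀ x : ℝ, x / (1 / 2) = 2 * x := fun x => by ring
  have hCD : ∀ t, pST P' 0 t = pST P' 1 t := by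
    intro t
    have h1 := hIP 0 1 t
    have h2 := hIP 1 0 t
    rw [condTS, condTS, hS, hS, hdiv, hdiv, Real.exp_zero, one_mul] at h1 h2
    linarith
  have hpT2 : ∀ t, pT P' t = pST P' 0 t + pST P' 1 t := by
    intro t
    rw [pT, Fin.sum_univ_two]
    rfl
  have hST0 : ∀ t, pST P' 0 t = P' 0 true t + P' 0 false t := by
    intro t; rw [pST, Fintype.sum_bool]
  have hYT : ∀ t, pYT P' true t = P' 0 true t + P' 1 true t := by
    intro t; rw [pYT, Fin.sum_univ_two]
  have hterm : ∀ t ∈ Finset.univ.filter (fun t => 0 < pT P' t),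
      pT P' t * u (postYT P' t) ≤ L * (P' 0 false t + P' 1 true t) := by
    intro t ht
    have hpos : 0 < pT P' t := (Finset.mem_filter.mp ht).2
    have hne : pT P' t ≠ 0 := hpos.ne'
    rw [hu, postYT]
    have h2 : pYT P' true t / pT P' t - 1 / 2 =
        (pYT P' true t - pT P' t / 2) / pT P' t := by
      rw [sub_div, div_right_comm, div_self hne]
    rw [h2, abs_div, abs_of_pos hpos, mul_comm (pT P' t), mul_assoc,
      div_mul_cancel₀ _ hne]
    have hval : pYT P' true t - pT P' t / 2 = P' 1 true t - P' 0 false t := by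
      rw [hYT, hpT2, ← hCD, hST0]
      ring
    rw [hval]
    have habs : |P' 1 true t - P' 0 false t| ≤ P' 0 false t + P' 1 true t := by
      rw [abs_le]
      have := hnn 1 true t
      have := hnn 0 false t
      constructor <;> linarith
    exact mul_le_mul_of_nonneg_left habs hL.le
  have hfin : ∑ t, (P' 0 false t + P' 1 true t) = Pr 0 false + Pr 1 true := by
    rw [Finset.sum_add_distrib, ← pSY, ← pSY, hM, hM]
  have hgoal : Pr 0 false + Pr 1 true = q1 := by
    rw [hPr, hPr]
    simp
    linarith
  calc EU P' u ≤ ∑ t ∈ Finset.univ.filter (fun t => 0 < pT P' t),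
        L * (P' 0 false t + P' 1 true t) := Finset.sum_le_sum hterm
    _ ≤ ∑ t, L * (P' 0 false t + P' 1 true t) := by
        apply Finset.sum_le_sum_of_subset_of_nonneg (Finset.filter_subset _ _)
        intro t _ _
        have := hnn 0 false t
        have := hnn 1 true t
        positivity
    _ = L * q1 := by rw [← Finset.mul_sum, hfin, hgoal]
    _ = L / (1 + Real.exp ε) := by rw [hq1]; ring


/-- the explicit utility-gap example: with
`π₀ = π₁ = 1/2`, `q_{s₀} = e^ε/(1+e^ε)`, `q_{s₁} = 1/(1+e^ε)` and
`u(q) = L·|q − 1/2|`, releasing `T = Y` is ε-IP with expected utility `L/2`,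
every 0-IP structure gets at most `L/(1+e^ε)`, and hence
`U_ε − U₀ ≥ L(e^ε−1)/(2(1+e^ε))`. -/
theorem statement14 (ε L : ℝ) (hε : 0 < ε) (hL : 0 < L)
    (q0 q1 : ℝ)
    (hq0 : q0 = Real.exp ε / (1 + Real.exp ε))
    (hq1 : q1 = 1 / (1 + Real.exp ε))
    (Pr : Fin 2 → Bool → ℝ)
    (hPr : ∀ (s : Fin 2) (y : Bool), Pr s y =
      (1 / 2) * (if s = 0 then (if y then q0 else 1 - q0)
                 else (if y then q1 else 1 - q1)))
    (u : ℝ → ℝ) (hu : ∀ q, u q = L * |q - 1 / 2|)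
    -- the information structure releasing T = Y
    (P : Fin 2 → Bool → Bool → ℝ)
    (hP : ∀ s y t, P s y t = if t = y then Pr s y else 0) :
    -- (i) it is a valid ε-IP information structure for this prior with EU = L/2
    InfoStructure P ∧ IsIP ε P ∧ (∀ s y, pSY P s y = Pr s y) ∧
    EU P u = L / 2 ∧
    -- (ii) every 0-IP structure with this marginal has EU ≤ L/(1+e^ε)
    (∀ (n : ℕ) (P' : Fin 2 → Bool → Fin n → ℝ),
      InfoStructure P' → IsIP 0 P' → (∀ s y, pSY P' s y = Pr s y) →
      EU P' u ≤ L / (1 + Real.exp ε)) ∧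
    -- consequently U_ε − U₀ ≥ L(e^ε−1)/(2(1+e^ε))
    sSup {x | ∃ (n : ℕ) (P' : Fin 2 → Bool → Fin n → ℝ),
        InfoStructure P' ∧ IsIP ε P' ∧ (∀ s y, pSY P' s y = Pr s y) ∧ EU P' u = x} -
      sSup {x | ∃ (n : ℕ) (P' : Fin 2 → Bool → Fin n → ℝ),
        InfoStructure P' ∧ IsIP 0 P' ∧ (∀ s y, pSY P' s y = Pr s y) ∧ EU P' u = x}
      ≥ L * (Real.exp ε - 1) / (2 * (1 + Real.exp ε)) := by
  have hE1 : 1 < Real.exp ε := by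
    calc (1:ℝ) = Real.exp 0 := (Real.exp_zero).symm
      _ < Real.exp ε := Real.exp_lt_exp.mpr hε
  have hEpos : (0:ℝ) < 1 + Real.exp ε := by linarith
  obtain ⟨hIS, hIP, hSY, hEU⟩ :=
    releaseY_props ε L hε hL q0 q1 hq0 hq1 Pr hPr u hu (Equiv.refl Bool) P
      (fun s y t => by rw [hP s y t]; by_cases h : t = y <;> simp [h])
  -- the same structure with signals `Fin 2`
  obtain ⟨hIS2, hIP2, hSY2, hEU2⟩ :=
    releaseY_props ε L hε hL q0 q1 hq0 hq1 Pr hPr u hu finTwoEquiv.symm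
      (fun s y t => if t = finTwoEquiv.symm y then Pr s y else 0)
      (fun s y t => by by_cases h : t = finTwoEquiv.symm y <;> simp [h])
  refine ⟨hIS, hIP, hSY, hEU,
    fun n P' a b c => zeroIP_bound ε L hε hL q0 q1 hq0 hq1 Pr hPr u hu n P' a b c, ?_⟩
  have hmem : (L / 2) ∈ {x | ∃ (n : ℕ) (P' : Fin 2 → Bool → Fin n → ℝ),
      InfoStructure P' ∧ IsIP ε P' ∧ (∀ s y, pSY P' s y = Pr s y) ∧ EU P' u = x} :=
    ⟨2, _, hIS2, hIP2, hSY2, hEU2⟩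
  have hbdd : ∀ x ∈ {x | ∃ (n : ℕ) (P' : Fin 2 → Bool → Fin n → ℝ),
      InfoStructure P' ∧ IsIP ε P' ∧ (∀ s y, pSY P' s y = Pr s y) ∧ EU P' u = x},
      x ≤ L / 2 := by
    rintro x ⟨n, P', hIS', -, -, rfl⟩
    exact EU_le_half L hL.le u hu P' hIS'
  have h1 : L / 2 ≤ sSup {x | ∃ (n : ℕ) (P' : Fin 2 → Bool → Fin n → ℝ),
      InfoStructure P' ∧ IsIP ε P' ∧ (∀ s y, pSY P' s y = Pr s y) ∧ EU P' u = x} :=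
    le_csSup ⟨L / 2, fun x hx => hbdd x hx⟩ hmem
  have h2 : sSup {x | ∃ (n : ℕ) (P' : Fin 2 → Bool → Fin n → ℝ),
      InfoStructure P' ∧ IsIP 0 P' ∧ (∀ s y, pSY P' s y = Pr s y) ∧ EU P' u = x}
      ≤ L / (1 + Real.exp ε) := by
    apply Real.sSup_le
    · rintro x ⟨n, P', hIS', hIP', hM', rfl⟩
      exact zeroIP_bound ε L hε hL q0 q1 hq0 hq1 Pr hPr u hu n P' hIS' hIP' hM'
    · positivity
  have hval : L / 2 - L / (1 + Real.exp ε) =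
      L * (Real.exp ε - 1) / (2 * (1 + Real.exp ε)) := by
    field_simp
    ring
  linarith

end IPPaper
end
end

section
/- Fix ε>0 and a binary-secret prior with 0 < q_{s₁} ≤ q_{s₀} < 1, and set R₁ = q_{s₀}/q_{s₁} and R₂ = (1−q_{s₁})/(1−q_{s₀}). Over the feasible set, the maximum value of l₁^{(0)} equals: q_{s₀} if R₁ ≤ e^ε and R₂ ≤ e^ε; e^ε·q_{s₁} if R₁ > e^ε and (R₂ ≤ e^ε, or R₂ > e^ε and q_{s₁} < 1/(1+e^ε)); and 1 − e^{−ε}·(1−q_{s₁}) if R₂ > e^ε and (R₁ ≤ e^ε, or R₁ > e^ε and q_{s₁} ≥ 1/(1+e^ε)). The maximum value of l₄^{(1)} equals: 1 − q_{s₁} if R₁ ≤ e^ε and R₂ ≤ e^ε; 1 − e^{−ε}·q_{s₀} if R₁ > e^ε and (R₂ ≤ e^ε, or R₂ > e^ε and q_{s₀} ≤ 1/(1+e^{−ε})); and e^ε·(1−q_{s₀}) if R₂ > e^ε and (R₁ ≤ e^ε, or R₁ > e^ε and q_{s₀} > 1/(1+e^{−ε})). Moreover both maxima are attained simultaneously by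 a single feasible point (the feasible dominant point). -/
/-!
Adding up each column and using the two proportionality constraints bounds `l₁^{(0)}` by each of
`q₀`, `e^ε q₁` and `1 - e^{-ε}(1 - q₁)`. Conversely, a pair `(a, b)` satisfying the box constraints
of `l₁^{(0)}` and `l₄^{(1)}` extends to a feasible point as soon as the masses `u = q₀ - a` and
`v = 1 - q₁ - b` left to the middle cells satisfy `u ≤ e^ε v` and `v ≤ e^ε u`, and the pair of
minima does. The case distinctions of the statement only decide which term attains each minimum.
-/

open Real
open scoped Classical

noncomputable section

namespace IPPaper

/-- Reversing the cells and swapping the secrets (`Feasible.reverse`) turns `l₄^{(1)}` into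
`l₁^{(0)}` and the prior `(q₀, q₁)` into `(1 - q₁, 1 - q₀)`, so the maximum of `l₄^{(1)}` is
`firstCellMax ε (1 - q1) (1 - q0)`. -/
def firstCellMax (ε q0 q1 : ℝ) : ℝ :=
  min q0 (min (Real.exp ε * q1) (1 - Real.exp (-ε) * (1 - q1)))

section

variable {ε q0 q1 : ℝ} {l : Fin 4 → Fin 2 → ℝ}

theorem Feasible.reverse (h : Feasible ε q0 q1 l) :
    Feasible ε (1 - q1) (1 - q0) (fun i j => l i.rev j.rev) := by
  obtain ⟨h01, h30, h10, h21, hlb0, hub0, hlb3, hub3, hsum, hnn⟩ := h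
  refine ⟨?_, ?_, ?_, ?_, ?_, ?_, ?_, ?_,
    fun j => (Equiv.sum_comp Fin.revPerm (fun i => l i j.rev)).trans (hsum j.rev),
    fun i j => hnn _ _⟩ <;> simp <;> assumption

theorem Feasible.le_firstCellMax (hε : 0 ≤ ε) (h : Feasible ε q0 q1 l) :
    l 0 0 ≤ firstCellMax ε q0 q1 := by
  obtain ⟨h01, h30, h10, h21, -, hub0, -, hub3, hsum, hnn⟩ := h
  have row0 := hsum 0
  have row1 := hsum 1
  simp only [Fin.sum_univ_four] at row0 row1
  rw [h01, h21] at row1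
  rw [h10, h30] at row0
  rw [h30] at hub3
  have hFE : Real.exp (-ε) ≤ Real.exp ε := Real.exp_le_exp.2 (by linarith)
  have hcancel : ∀ x, Real.exp (-ε) * (Real.exp ε * x) = x := fun x => by
    rw [← mul_assoc, ← Real.exp_add, neg_add_cancel, Real.exp_zero, one_mul]
  have h31 : Real.exp (-ε) * l 3 1 ≤ 1 - q0 :=
    (mul_le_mul_of_nonneg_left hub3 (Real.exp_pos _).le).trans_eq (hcancel _)
  refine le_min (by nlinarith [hnn 1 1, hnn 2 0, Real.exp_pos ε])
    (le_min (h01 ▸ hub0) ?_)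
  calc l 0 0 = 1 - Real.exp (-ε) * (1 - q1)
        - ((Real.exp ε - Real.exp (-ε)) * l 1 1 + (1 - q0 - Real.exp (-ε) * l 3 1)) := by
        linear_combination row0 - Real.exp (-ε) * row1 + hcancel (l 2 0)
    _ ≤ 1 - Real.exp (-ε) * (1 - q1) :=
        sub_le_self _ (add_nonneg (mul_nonneg (sub_nonneg.2 hFE) (hnn 1 1)) (sub_nonneg.2 h31))

theorem exists_feasible_of_bounds (hε : 0 < ε) {a b : ℝ}
    (ha : Real.exp (-ε) * q1 ≤ a) (ha' : a ≤ Real.exp ε * q1)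
    (hb : Real.exp (-ε) * (1 - q0) ≤ b) (hb' : b ≤ Real.exp ε * (1 - q0))
    (hu : q0 - a ≤ Real.exp ε * (1 - q1 - b)) (hv : 1 - q1 - b ≤ Real.exp ε * (q0 - a)) :
    ∃ l, Feasible ε q0 q1 l ∧ l 0 0 = a ∧ l 3 1 = b := by
  set E := Real.exp ε
  have hF : 0 < Real.exp (-ε) := Real.exp_pos _
  have hFE : Real.exp (-ε) < E := Real.exp_lt_exp.2 (by linarith)
  have hE2 : 0 < E ^ 2 - 1 := by nlinarith [Real.one_lt_exp_iff.2 hε]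
  have hq1 : 0 ≤ q1 := by nlinarith
  have hq0 : 0 ≤ 1 - q0 := by nlinarith
  -- `x = l₂^{(1)}` and `y = l₃^{(0)}` solve `E x + y = q₀ - a`, `x + E y = 1 - q₁ - b`.
  set x := (E * (q0 - a) - (1 - q1 - b)) / (E ^ 2 - 1)
  set y := (E * (1 - q1 - b) - (q0 - a)) / (E ^ 2 - 1)
  have hx : 0 ≤ x := div_nonneg (by linarith) hE2.le
  have hy : 0 ≤ y := div_nonneg (by linarith) hE2.le
  have row0 : E * x + y = q0 - a := by simp only [x, y]; field_simp; ring
  have row1 : x + E * y = 1 - q1 - b := by simp only [x, y]; field_simp; ring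
  refine ⟨![![a, q1], ![E * x, x], ![y, E * y], ![1 - q0, b]],
    ⟨rfl, rfl, rfl, rfl, ha, ha', hb, hb', fun j => ?_, fun i j => ?_⟩, rfl, rfl⟩
  · fin_cases j <;> simp [Fin.sum_univ_four] <;> linarith
  · fin_cases i <;> fin_cases j <;> simp <;> nlinarith

theorem exp_neg_mul_le_firstCellMax (hε : 0 ≤ ε) (hq1 : 0 ≤ q1) (hq01 : q1 ≤ q0) :
    Real.exp (-ε) * q1 ≤ firstCellMax ε q0 q1 := by
  have hF : Real.exp (-ε) ≤ 1 := Real.exp_le_one_iff.2 (by linarith)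
  have hE : 1 ≤ Real.exp ε := Real.one_le_exp hε
  refine le_min ?_ (le_min ?_ ?_) <;> nlinarith

theorem firstCellMax_le_exp_mul : firstCellMax ε q0 q1 ≤ Real.exp ε * q1 :=
  (min_le_right _ _).trans (min_le_left _ _)

theorem sub_firstCellMax_le (hε : 0 ≤ ε) (q0 q1 : ℝ) :
    q0 - firstCellMax ε q0 q1 ≤ Real.exp ε * (1 - q1 - firstCellMax ε (1 - q1) (1 - q0)) := by
  set E := Real.exp ε
  have hE : 1 ≤ E := Real.one_le_exp hε
  have hcancel : ∀ x, E * (Real.exp (-ε) * x) = x := fun x => by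
    rw [← mul_assoc, ← Real.exp_add, add_neg_cancel, Real.exp_zero, one_mul]
  have hb₁ : firstCellMax ε (1 - q1) (1 - q0) ≤ 1 - q1 := min_le_left _ _
  have hb₂ : firstCellMax ε (1 - q1) (1 - q0) ≤ E * (1 - q0) := firstCellMax_le_exp_mul
  have hb₃ : firstCellMax ε (1 - q1) (1 - q0) ≤ 1 - Real.exp (-ε) * (1 - (1 - q0)) :=
    (min_le_right _ _).trans (min_le_right _ _)
  rw [sub_sub_cancel] at hb₃
  have ha : firstCellMax ε q0 q1 ≤ q0 := min_le_left _ _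
  generalize firstCellMax ε (1 - q1) (1 - q0) = b at *
  unfold firstCellMax at ha ⊢
  rcases min_choice q0 (min (E * q1) (1 - Real.exp (-ε) * (1 - q1))) with h | h <;>
    rw [h] at ha ⊢
  · nlinarith
  rcases min_choice (E * q1) (1 - Real.exp (-ε) * (1 - q1)) with h | h <;>
    rw [h] at ha ⊢
  · nlinarith [mul_le_mul_of_nonneg_left hb₃ (by linarith : (0 : ℝ) ≤ E), hcancel q0]
  · nlinarith [mul_le_mul_of_nonneg_left hb₂ (by linarith : (0 : ℝ) ≤ E), hcancel (1 - q1),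
      mul_nonneg (by nlinarith : (0 : ℝ) ≤ E * E - 1) (sub_nonneg.2 ha)]

theorem exists_feasible_firstCellMax (hε : 0 < ε) (hq1 : 0 ≤ q1) (hq01 : q1 ≤ q0) (hq0 : q0 ≤ 1) :
    ∃ l, Feasible ε q0 q1 l ∧ l 0 0 = firstCellMax ε q0 q1 ∧
      l 3 1 = firstCellMax ε (1 - q1) (1 - q0) := by
  refine exists_feasible_of_bounds hε (exp_neg_mul_le_firstCellMax hε.le hq1 hq01)
    firstCellMax_le_exp_mul
    (exp_neg_mul_le_firstCellMax hε.le (sub_nonneg.2 hq0) (sub_le_sub_left hq01 1))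
    firstCellMax_le_exp_mul (sub_firstCellMax_le hε.le q0 q1) ?_
  simpa only [sub_sub_cancel] using sub_firstCellMax_le hε.le (1 - q1) (1 - q0)

theorem eq_min_min_of_cases {a b c M : ℝ}
    (ha : a ≤ b ∧ a ≤ c → M = a)
    (hb : b < a ∧ (a ≤ c ∨ (c < a ∧ b < c)) → M = b)
    (hc : c < a ∧ (a ≤ b ∨ (b < a ∧ c ≤ b)) → M = c) :
    M = min a (min b c) := by
  rcases le_or_gt a b with hab | hab <;> rcases le_or_gt a c with hac | hac
  · rw [ha ⟨hab, hac⟩, min_eq_left (le_min hab hac)]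
  · rw [hc ⟨hac, Or.inl hab⟩, min_eq_right (hac.trans_le hab).le, min_eq_right hac.le]
  · rw [hb ⟨hab, Or.inl hac⟩, min_eq_left (hab.le.trans hac), min_eq_right hab.le]
  · rcases lt_or_ge b c with hbc | hbc
    · rw [hb ⟨hab, Or.inr ⟨hac, hbc⟩⟩, min_eq_left hbc.le, min_eq_right hab.le]
    · rw [hc ⟨hac, Or.inr ⟨hab, hbc⟩⟩, min_eq_right hbc, min_eq_right hac.le]

theorem div_le_exp_iff_exp_neg_mul_le {x y : ℝ} (hy : 0 < y) :
    x / y ≤ Real.exp ε ↔ Real.exp (-ε) * x ≤ y := by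
  rw [div_le_iff₀ hy, Real.exp_neg, inv_mul_le_iff₀ (Real.exp_pos ε)]

theorem lt_one_div_one_add_exp_iff (hε : 0 < ε) :
    q1 < 1 / (1 + Real.exp ε) ↔ Real.exp ε * q1 < 1 - Real.exp (-ε) * (1 - q1) := by
  have hE : 0 < Real.exp ε - 1 := sub_pos.2 (Real.one_lt_exp_iff.2 hε)
  have hc : 0 < Real.exp (-ε) * (Real.exp ε - 1) := mul_pos (Real.exp_pos _) hE
  have hcancel : Real.exp (-ε) * Real.exp ε = 1 := by rw [← Real.exp_add]; simp
  have key : Real.exp ε * q1 - (1 - Real.exp (-ε) * (1 - q1)) =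
      Real.exp (-ε) * (Real.exp ε - 1) * (q1 * (1 + Real.exp ε) - 1) := by
    linear_combination (1 - Real.exp ε * q1) * hcancel
  rw [lt_div_iff₀ (by positivity)]
  constructor <;> intro h <;> nlinarith

theorem le_one_div_one_add_exp_neg_iff (hε : 0 < ε) :
    q0 ≤ 1 / (1 + Real.exp (-ε)) ↔ 1 - Real.exp (-ε) * q0 ≤ Real.exp ε * (1 - q0) := by
  have hE : 0 < Real.exp ε - 1 := sub_pos.2 (Real.one_lt_exp_iff.2 hε)
  have hcancel : Real.exp (-ε) * Real.exp ε = 1 := by rw [← Real.exp_add]; simp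
  have key : 1 - Real.exp (-ε) * q0 - Real.exp ε * (1 - q0) =
      (Real.exp ε - 1) * (q0 * (1 + Real.exp (-ε)) - 1) := by
    linear_combination (-q0) * hcancel
  rw [le_div_iff₀ (by positivity)]
  constructor <;> intro h <;> nlinarith

theorem eq_firstCellMax_of_cases (hε : 0 < ε) (hq1 : 0 < q1) (hq0 : q0 < 1) {M : ℝ}
    (ha : q0 / q1 ≤ Real.exp ε ∧ (1 - q1) / (1 - q0) ≤ Real.exp ε → M = q0)
    (hb : Real.exp ε < q0 / q1 ∧
        ((1 - q1) / (1 - q0) ≤ Real.exp ε ∨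
         (Real.exp ε < (1 - q1) / (1 - q0) ∧ q1 < 1 / (1 + Real.exp ε))) →
      M = Real.exp ε * q1)
    (hc : Real.exp ε < (1 - q1) / (1 - q0) ∧
        (q0 / q1 ≤ Real.exp ε ∨
         (Real.exp ε < q0 / q1 ∧ 1 / (1 + Real.exp ε) ≤ q1)) →
      M = 1 - Real.exp (-ε) * (1 - q1)) :
    M = firstCellMax ε q0 q1 := by
  have hR₂ : (1 - q1) / (1 - q0) ≤ Real.exp ε ↔ q0 ≤ 1 - Real.exp (-ε) * (1 - q1) := by
    rw [div_le_exp_iff_exp_neg_mul_le (by linarith), le_sub_comm]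
  have hR₂' := not_le.symm.trans (hR₂.not.trans not_le)
  have hq := lt_one_div_one_add_exp_iff (q1 := q1) hε
  have hq' := not_lt.symm.trans (hq.not.trans not_lt)
  simp only [div_le_iff₀ hq1, lt_div_iff₀ hq1, hR₂, hR₂', hq, hq'] at ha hb hc
  exact eq_min_min_of_cases ha hb hc

theorem eq_firstCellMax_rev_of_cases (hε : 0 < ε) (hq1 : 0 < q1) (hq0 : q0 < 1) {M : ℝ}
    (ha : q0 / q1 ≤ Real.exp ε ∧ (1 - q1) / (1 - q0) ≤ Real.exp ε → M = 1 - q1)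
    (hb : Real.exp ε < q0 / q1 ∧
        ((1 - q1) / (1 - q0) ≤ Real.exp ε ∨
         (Real.exp ε < (1 - q1) / (1 - q0) ∧ q0 ≤ 1 / (1 + Real.exp (-ε)))) →
      M = 1 - Real.exp (-ε) * q0)
    (hc : Real.exp ε < (1 - q1) / (1 - q0) ∧
        (q0 / q1 ≤ Real.exp ε ∨
         (Real.exp ε < q0 / q1 ∧ 1 / (1 + Real.exp (-ε)) < q0)) →
      M = Real.exp ε * (1 - q0)) :
    M = firstCellMax ε (1 - q1) (1 - q0) := by
  have h1q0 : 0 < 1 - q0 := sub_pos.2 hq0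
  have hR₁ : q0 / q1 ≤ Real.exp ε ↔ 1 - q1 ≤ 1 - Real.exp (-ε) * q0 :=
    (div_le_exp_iff_exp_neg_mul_le hq1).trans (sub_le_sub_iff_left 1).symm
  have hR₁' := not_le.symm.trans (hR₁.not.trans not_le)
  have hq := le_one_div_one_add_exp_neg_iff (q0 := q0) hε
  have hq' := not_le.symm.trans (hq.not.trans not_le)
  simp only [div_le_iff₀ h1q0, lt_div_iff₀ h1q0, hR₁, hR₁', hq, hq'] at ha hb hc
  rw [firstCellMax, sub_sub_cancel]
  exact eq_min_min_of_cases (fun h => ha h.symm) hc hb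

end

/-- the maxima of `l₁^{(0)}` and `l₄^{(1)}` over the feasible set,
in closed form by cases on `R₁ = q₀/q₁`, `R₂ = (1-q₁)/(1-q₀)`, attained
simultaneously at a single feasible point. -/
theorem statement17 (ε q0 q1 : ℝ)
    (hε : 0 < ε) (hq1 : 0 < q1) (hq01 : q1 ≤ q0) (hq0 : q0 < 1)
    (M1 M4 : ℝ)
    -- case values for the maximum of l₁^{(0)}
    (hM1a : q0 / q1 ≤ Real.exp ε ∧ (1 - q1) / (1 - q0) ≤ Real.exp ε → M1 = q0)
    (hM1b : Real.exp ε < q0 / q1 ∧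
        ((1 - q1) / (1 - q0) ≤ Real.exp ε ∨
         (Real.exp ε < (1 - q1) / (1 - q0) ∧ q1 < 1 / (1 + Real.exp ε))) →
      M1 = Real.exp ε * q1)
    (hM1c : Real.exp ε < (1 - q1) / (1 - q0) ∧
        (q0 / q1 ≤ Real.exp ε ∨
         (Real.exp ε < q0 / q1 ∧ 1 / (1 + Real.exp ε) ≤ q1)) →
      M1 = 1 - Real.exp (-ε) * (1 - q1))
    -- case values for the maximum of l₄^{(1)}
    (hM4a : q0 / q1 ≤ Real.exp ε ∧ (1 - q1) / (1 - q0) ≤ Real.exp ε → M4 = 1 - q1)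
    (hM4b : Real.exp ε < q0 / q1 ∧
        ((1 - q1) / (1 - q0) ≤ Real.exp ε ∨
         (Real.exp ε < (1 - q1) / (1 - q0) ∧ q0 ≤ 1 / (1 + Real.exp (-ε)))) →
      M4 = 1 - Real.exp (-ε) * q0)
    (hM4c : Real.exp ε < (1 - q1) / (1 - q0) ∧
        (q0 / q1 ≤ Real.exp ε ∨
         (Real.exp ε < q0 / q1 ∧ 1 / (1 + Real.exp (-ε)) < q0)) →
      M4 = Real.exp ε * (1 - q0)) :
    (∀ l, Feasible ε q0 q1 l → l 0 0 ≤ M1 ∧ l 3 1 ≤ M4) ∧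
    (∃ l, Feasible ε q0 q1 l ∧ l 0 0 = M1 ∧ l 3 1 = M4) := by
  obtain rfl := eq_firstCellMax_of_cases hε hq1 hq0 hM1a hM1b hM1c
  obtain rfl := eq_firstCellMax_rev_of_cases hε hq1 hq0 hM4a hM4b hM4c
  exact ⟨fun l hl => ⟨hl.le_firstCellMax hε.le, hl.reverse.le_firstCellMax hε.le⟩,
    exists_feasible_firstCellMax hε hq1.le hq01 hq0.le⟩

end IPPaper
end
end
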